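/- arXiv:2312.00885 — 8 statements merged into one kernel-verified Lean document; each statement's English description precedes it below -/
import Mathlib

section
/- Let q be a prime power and let C be a minimal linear [n,k]_q code. Then every nonzero codeword of C has Hamming weight at least (k-1)(q-1)+1; in particular the minimum distance d of C satisfies d ≥ (k-1)(q-1)+1. -/
/-! Let `c ≠ 0` be a codeword of the minimal code `C` and let `V` be a complement of `F ∙ c` in `C`,
with basis `b₁, …, b_{k-1}`. By minimality, a codeword not proportional to `c` takes every value
`β c i` at some `i ∈ supp c`; hence the `wt c` points `(b_j i / c i)_j` of `F^{k-1}` meet every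
affine hyperplane. A blocking set of the affine space `AG(k-1, q)` has at least `(k-1)(q-1)+1`
points, by a Chevalley–Warning argument. -/

/-- The Hamming weight of a word: the number of nonzero coordinates. -/
noncomputable def wt {ι F : Type*} [Zero F] (c : ι → F) : ℕ := Set.ncard {i | c i ≠ 0}

/-- A linear code (a submodule of `ι → F`) is minimal if the support of every nonzero
codeword is minimal with respect to inclusion among supports of nonzero codewords. -/
def IsMinimalCode {ι F : Type*} [Semiring F] (C : Submodule F (ι → F)) : Prop :=
  ∀ c ∈ C, c ≠ 0 → ∀ u ∈ C, u ≠ 0 →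
    {i | u i ≠ 0} ⊆ {i | c i ≠ 0} → {i | u i ≠ 0} = {i | c i ≠ 0}

open Finset MvPolynomial Module

lemma totalDegree_one_sub_sum_C_mul_X_le {R σ : Type*} [CommRing R] [Nontrivial R] [Fintype σ]
    (p : σ → R) : (1 - ∑ j, C (p j) * X j : MvPolynomial σ R).totalDegree ≤ 1 := by
  refine (totalDegree_sub _ _).trans (max_le (by simp) ?_)
  refine (totalDegree_finsetSum _ _).trans (Finset.sup_le fun j _ => ?_)
  exact (totalDegree_mul _ _).trans (by simp [totalDegree_X])

section Blocking

variable {F σ : Type*} [Field F] [Fintype F] [Fintype σ] [DecidableEq σ]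

/-- Chevalley–Warning: the polynomial `∏_{p ∈ Q} (1 - p ⬝ᵥ x)` vanishes off the origin, so its
values do not sum to zero and its degree is at least `|σ| (q - 1)`. -/
theorem card_mul_card_sub_one_le_card_of_forall_ne_zero_exists_dotProduct_eq_one
    (Q : Finset (σ → F)) (hQ : ∀ x ≠ 0, ∃ p ∈ Q, p ⬝ᵥ x = 1) :
    Fintype.card σ * (Fintype.card F - 1) ≤ #Q := by
  by_contra! hlt
  set f : MvPolynomial σ F := ∏ p ∈ Q, (1 - ∑ j, C (p j) * X j)
  have hdeg : f.totalDegree < (Fintype.card F - 1) * Fintype.card σ := by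
    calc f.totalDegree ≤ ∑ p ∈ Q, (1 - ∑ j, C (p j) * X j : MvPolynomial σ F).totalDegree :=
          totalDegree_finsetProd _ _
      _ ≤ ∑ _p ∈ Q, 1 := sum_le_sum fun p _ => totalDegree_one_sub_sum_C_mul_X_le p
      _ < _ := by rw [sum_const, smul_eq_mul, mul_one, mul_comm]; exact hlt
  have heval (x : σ → F) : eval x f = ∏ p ∈ Q, (1 - p ⬝ᵥ x) := by
    simp [f, map_prod, dotProduct]
  have hvanish (x : σ → F) (hx : x ≠ 0) : eval x f = 0 := by
    obtain ⟨p, hp, hpx⟩ := hQ x hx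
    rw [heval]
    exact prod_eq_zero hp (by rw [hpx, sub_self])
  have hsum : ∑ x, eval x f = 1 := by
    rw [Fintype.sum_eq_single 0 hvanish, heval]
    simp
  exact one_ne_zero (hsum.symm.trans (sum_eval_eq_zero f hdeg))

/-- Jamison, Brouwer–Schrijver. After translating a point of `P` to the origin, the other points,
read as normal vectors, give hyperplanes `p ⬝ᵥ x = 1` covering `F^σ ∖ {0}`. -/
theorem card_mul_card_sub_one_add_one_le_card_of_blocking (P : Finset (σ → F))
    (hne : P.Nonempty) (hP : ∀ α ≠ 0, ∀ β, ∃ p ∈ P, α ⬝ᵥ p = β) :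
    Fintype.card σ * (Fintype.card F - 1) + 1 ≤ #P := by
  classical
  obtain ⟨p₀, hp₀⟩ := hne
  set Q := (P.image (· - p₀)).erase 0
  have hQ : ∀ x ≠ 0, ∃ p ∈ Q, p ⬝ᵥ x = 1 := by
    intro x hx
    obtain ⟨p, hp, hpx⟩ := hP x hx (x ⬝ᵥ p₀ + 1)
    have hdot : (p - p₀) ⬝ᵥ x = 1 := by
      rw [sub_dotProduct, dotProduct_comm p, dotProduct_comm p₀, hpx, add_sub_cancel_left]
    refine ⟨p - p₀, mem_erase.2 ⟨fun h => ?_, mem_image_of_mem _ hp⟩, hdot⟩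
    simp [h] at hdot
  calc Fintype.card σ * (Fintype.card F - 1) + 1 ≤ #Q + 1 :=
        Nat.add_le_add_right
          (card_mul_card_sub_one_le_card_of_forall_ne_zero_exists_dotProduct_eq_one Q hQ) 1
    _ = #(P.image (· - p₀)) := card_erase_add_one (mem_image.2 ⟨p₀, hp₀, sub_self p₀⟩)
    _ ≤ #P := card_image_le

end Blocking

namespace IsMinimalCode

variable {ι F : Type*} [Field F] {C : Submodule F (ι → F)} {c u v : ι → F}

theorem exists_eq_smul_of_support_subset (hmin : IsMinimalCode C) (hc : c ∈ C) (hc0 : c ≠ 0)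
    (hu : u ∈ C) (hsub : Function.support u ⊆ Function.support c) : ∃ γ : F, u = γ • c := by
  obtain ⟨i₀, hi₀⟩ := Function.ne_iff.1 hc0
  refine ⟨u i₀ / c i₀, ?_⟩
  by_contra hne
  have hw0 : u - (u i₀ / c i₀) • c ≠ 0 := sub_ne_zero.2 hne
  have hwsub : Function.support (u - (u i₀ / c i₀) • c) ⊆ Function.support c := by
    intro i hi
    by_contra hci
    have hui : u i = 0 := Function.notMem_support.1 fun h => hci (hsub h)
    exact hi (by simp [hui, Function.notMem_support.1 hci])
  have heq := hmin c hc hc0 _ (C.sub_mem hu (C.smul_mem _ hc)) hw0 hwsub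
  have hi₀' : i₀ ∉ Function.support (u - (u i₀ / c i₀) • c) := by
    simp [div_mul_cancel₀ _ hi₀]
  exact hi₀' ((Set.ext_iff.1 heq i₀).2 hi₀)

/-- Otherwise the support of `v - β c` contains that of `c`; by minimality the two supports are
equal, which forces `v - β c` to be proportional to `c`. -/
theorem exists_apply_eq_mul (hmin : IsMinimalCode C) (hc : c ∈ C) (hc0 : c ≠ 0) (hv : v ∈ C)
    (hvc : ∀ γ : F, v ≠ γ • c) (β : F) : ∃ i, c i ≠ 0 ∧ v i = β * c i := by
  by_contra! hne
  have hw : v - β • c ∈ C := C.sub_mem hv (C.smul_mem β hc)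
  have hw0 : v - β • c ≠ 0 := sub_ne_zero.2 (hvc β)
  have hsub : Function.support c ⊆ Function.support (v - β • c) := fun i hi =>
    sub_ne_zero.2 (hne i hi)
  have heq := hmin _ hw hw0 c hc hc0 hsub
  obtain ⟨γ, hγ⟩ := hmin.exists_eq_smul_of_support_subset hc hc0 hw heq.ge
  exact hvc (β + γ) (by rw [add_smul, ← hγ, add_sub_cancel])

theorem finrank_mul_card_sub_one_add_one_le_wt [Fintype ι] [Fintype F] (hmin : IsMinimalCode C)
    (hc : c ∈ C) (hc0 : c ≠ 0) {V : Submodule F (ι → F)} (hVC : V ≤ C) (hV : (F ∙ c) ⊓ V = ⊥) :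
    finrank F V * (Fintype.card F - 1) + 1 ≤ wt c := by
  classical
  let b := Module.finBasis F V
  set S := univ.filter fun i => c i ≠ 0
  set P : Finset (Fin (finrank F V) → F) := S.image fun i j => (b j : ι → F) i / c i
  have hP : ∀ α ≠ 0, ∀ β, ∃ p ∈ P, α ⬝ᵥ p = β := by
    intro α hα β
    set x : V := ∑ j, α j • b j
    have hx0 : x ≠ 0 := fun h =>
      hα (funext (Fintype.linearIndependent_iff.1 b.linearIndependent α h))
    have hxc : ∀ γ : F, (x : ι → F) ≠ γ • c := by
      intro γ h
      have hmem : (x : ι → F) ∈ (F ∙ c) ⊓ V :=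
        ⟨h ▸ Submodule.smul_mem _ γ (Submodule.mem_span_singleton_self c), x.2⟩
      rw [hV, Submodule.mem_bot, ZeroMemClass.coe_eq_zero] at hmem
      exact hx0 hmem
    obtain ⟨i, hci, hxi⟩ := hmin.exists_apply_eq_mul hc hc0 (hVC x.2) hxc β
    refine ⟨_, mem_image_of_mem _ (mem_filter.2 ⟨mem_univ i, hci⟩), ?_⟩
    calc α ⬝ᵥ (fun j => (b j : ι → F) i / c i) = (x : ι → F) i / c i := by
          simp [x, dotProduct, sum_div, mul_div_assoc]
      _ = β := by rw [hxi, mul_div_cancel_right₀ _ hci]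
  have hPne : P.Nonempty := by
    obtain ⟨i, hi⟩ := Function.ne_iff.1 hc0
    exact ⟨_, mem_image_of_mem _ (mem_filter.2 ⟨mem_univ i, hi⟩)⟩
  calc finrank F V * (Fintype.card F - 1) + 1 ≤ #P := by
        simpa using card_mul_card_sub_one_add_one_le_card_of_blocking P hPne hP
    _ ≤ #S := card_image_le
    _ = wt c := by rw [wt, ← Set.ncard_coe_finset]; congr 1; ext; simp [S]

end IsMinimalCode

theorem minimal_code_min_weight_lower_bound_general
    (q n k : ℕ)
    (F : Type*) [Field F] [Fintype F] (hF : Fintype.card F = q)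
    (C : Submodule F (Fin n → F)) (hk : Module.finrank F C = k)
    (hmin : IsMinimalCode C) :
    ∀ c ∈ C, c ≠ 0 → (k - 1) * (q - 1) + 1 ≤ wt c := by
  intro c hc hc0
  obtain ⟨V, hVC, hinf, hsup⟩ := Set.Iic.complementedLattice_iff.1 inferInstance (F ∙ c)
    ((Submodule.span_singleton_le_iff_mem c C).2 hc)
  have hV : finrank F V = k - 1 := by
    have := Submodule.finrank_sup_add_finrank_inf_eq (F ∙ c) V
    rw [hsup, hinf, finrank_bot, finrank_span_singleton hc0, hk] at this
    omega
  rw [← hF, ← hV]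
  exact hmin.finrank_mul_card_sub_one_add_one_le_wt hc hc0 hVC hinf

/-- Let `q` be a prime power and let `C` be a minimal linear `[n,k]_q` code.
Then every nonzero codeword of `C` has Hamming weight at least `(k-1)(q-1)+1`;
in particular the minimum distance of `C` is at least `(k-1)(q-1)+1`. -/
theorem minimal_code_min_weight_lower_bound
    (q n k : ℕ) (hq : IsPrimePow q)
    (F : Type*) [Field F] [Fintype F] (hF : Fintype.card F = q)
    (C : Submodule F (Fin n → F)) (hk : Module.finrank F C = k)
    (hmin : IsMinimalCode C) :
    ∀ c ∈ C, c ≠ 0 → (k - 1) * (q - 1) + 1 ≤ wt c :=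
  minimal_code_min_weight_lower_bound_general q n k F hF C hk hmin
end

section
/- Let q be a prime power and let C be a minimal linear [n,k]_q code. Then every nonzero codeword of C has Hamming weight at most n-k+1, i.e., the maximum nonzero weight w_max of C satisfies w_max ≤ n-k+1. -/
/-!
If `i` lies in the support of a nonzero codeword `c` of a minimal code `C`, a codeword vanishing
outside `supp c` and at `i` has support strictly inside `supp c`, so it is zero. Hence restricting
`C` to the `n - wt c + 1` coordinates outside `supp c \ {i}` is injective, and
`dim C ≤ n - wt c + 1`.
-/

open Finset

namespace IsMinimalCode

variable {ι F : Type*}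

theorem eq_zero_of_vanishing [Semiring F] {C : Submodule F (ι → F)} (hmin : IsMinimalCode C)
    {c u : ι → F} (hc : c ∈ C) (hu : u ∈ C) {i : ι} (hci : c i ≠ 0)
    (hu_out : ∀ j, c j = 0 → u j = 0) (hui : u i = 0) : u = 0 := by
  by_contra hu0
  have hc0 : c ≠ 0 := fun h => hci (congrFun h i)
  have hsupp := hmin c hc hc0 u hu hu0 fun j huj hcj => huj (hu_out j hcj)
  exact (hsupp ▸ hci : i ∈ {j | u j ≠ 0}) hui

theorem finrank_add_wt_le [DivisionRing F] [Fintype ι]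
    {C : Submodule F (ι → F)} (hmin : IsMinimalCode C) {c : ι → F} (hc : c ∈ C) (hc0 : c ≠ 0) :
    Module.finrank F C + wt c ≤ Fintype.card ι + 1 := by
  classical
  obtain ⟨i, hci⟩ : ∃ i, c i ≠ 0 := Function.ne_iff.mp hc0
  set T : Finset ι := ({j | c j = 0} : Finset ι) ∪ {i}
  let restrict : C →ₗ[F] (T → F) := LinearMap.funLeft F F ((↑) : T → ι) ∘ₗ C.subtype
  have hinj : Function.Injective restrict := by
    refine (injective_iff_map_eq_zero restrict).mpr fun u hu => Subtype.ext ?_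
    refine hmin.eq_zero_of_vanishing hc u.2 hci (fun j hj => ?_) ?_
    · exact congrFun hu ⟨j, by simp [T, hj]⟩
    · exact congrFun hu ⟨i, by simp [T]⟩
  have hrank : Module.finrank F C ≤ #T := by
    simpa using LinearMap.finrank_le_finrank_of_injective hinj
  have hwt : wt c = #{j | c j ≠ 0} := by
    simp [wt, Set.ncard_eq_toFinset_card']
  have hT : #T ≤ #{j | c j = 0} + 1 := (card_union_le _ _).trans_eq (by rw [card_singleton])
  have hsplit : #{j | c j = 0} + #{j | c j ≠ 0} = Fintype.card ι :=
    card_filter_add_card_filter_not _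
  omega

end IsMinimalCode

theorem minimal_code_max_weight_upper_bound_general
    (n k : ℕ)
    (F : Type*) [Field F]
    (C : Submodule F (Fin n → F)) (hk : Module.finrank F C = k)
    (hmin : IsMinimalCode C) :
    ∀ c ∈ C, c ≠ 0 → wt c ≤ n - k + 1 := by
  intro c hc hc0
  have hbound := hmin.finrank_add_wt_le hc hc0
  rw [Fintype.card_fin] at hbound
  omega

/-- Let `q` be a prime power and let `C` be a minimal linear `[n,k]_q` code.
Then every nonzero codeword of `C` has Hamming weight at most `n-k+1`, i.e.,
the maximum nonzero weight of `C` satisfies `w_max ≤ n-k+1`. -/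
theorem minimal_code_max_weight_upper_bound
    (q n k : ℕ) (hq : IsPrimePow q)
    (F : Type*) [Field F] [Fintype F] (hF : Fintype.card F = q)
    (C : Submodule F (Fin n → F)) (hk : Module.finrank F C = k)
    (hmin : IsMinimalCode C) :
    ∀ c ∈ C, c ≠ 0 → wt c ≤ n - k + 1 :=
  minimal_code_max_weight_upper_bound_general n k F C hk hmin
end

section
/- Let q be a prime power, Δ and t positive integers, and let C be a Δ-divisible minimal linear [n,k]_q code. Then the t-fold repetition of C (each codeword c is replaced by t concatenated copies of c) is a (t·Δ)-divisible minimal linear [t·n, k]_q code. In particular, m(k,q;Δ) ≤ m(k,q;t·Δ) ≤ t·m(k,q;Δ) and m(k,q) ≤ m(k,q;Δ) ≤ Δ·m(k,q). -/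
/-- `mDiv F k Δ` is the minimum possible length `n` of a `Δ`-divisible minimal `[n,k]` code
over the field `F`; for `Fintype.card F = q` this is `m(k,q;Δ)`, and `mDiv F k 1 = m(k,q)`. -/
noncomputable def mDiv (F : Type*) [Field F] (k Δ : ℕ) : ℕ :=
  sInf {n : ℕ | ∃ C : Submodule F (Fin n → F),
    Module.finrank F C = k ∧ IsMinimalCode C ∧ ∀ c ∈ C, Δ ∣ wt c}

/-- The `t`-fold repetition map: each word `c` of length `n` is replaced by `t`
concatenated copies of `c`. -/
def repMap (F : Type*) [Field F] (t n : ℕ) : (Fin n → F) →ₗ[F] (Fin (t * n) → F) where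
  toFun c := fun j => c (finProdFinEquiv.symm j).2
  map_add' _ _ := rfl
  map_smul' _ _ := rfl
/-!
Repeating every coordinate `t` times pulls supports back along the surjection
`Fin (t * n) → Fin n`, which preserves and reflects inclusions of supports (so minimality
survives) and multiplies every weight by exactly `t` (so `Δ`-divisibility becomes
`t·Δ`-divisibility). The bounds on `m(k,q;Δ)` follow by repeating a shortest code, and from
the fact that a `Δ'`-divisible code is `Δ`-divisible whenever `Δ ∣ Δ'`.
-/

section PullBack

variable {F ι ι' : Type*} [Semiring F] {σ : ι' → ι}

lemma IsMinimalCode.map_funLeft {C : Submodule F (ι → F)} (hmin : IsMinimalCode C)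
    (hσ : Function.Surjective σ) : IsMinimalCode (C.map (LinearMap.funLeft F F σ)) := by
  rintro _ ⟨c, hc, rfl⟩ hc0 _ ⟨u, hu, rfl⟩ hu0 hsub
  have hc0' : c ≠ 0 := by rintro rfl; exact hc0 (map_zero _)
  have hu0' : u ≠ 0 := by rintro rfl; exact hu0 (map_zero _)
  change σ ⁻¹' {i | u i ≠ 0} ⊆ σ ⁻¹' {i | c i ≠ 0} at hsub
  change σ ⁻¹' {i | u i ≠ 0} = σ ⁻¹' {i | c i ≠ 0}
  rw [hmin c hc hc0' u hu hu0' (hσ.preimage_subset_preimage_iff.mp hsub)]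

end PullBack

section Repetition

variable {F : Type*} [Field F] {t n : ℕ}

lemma repMap_eq_funLeft :
    repMap F t n = LinearMap.funLeft F F (fun j => (finProdFinEquiv.symm j).2) := rfl

lemma surjective_snd_finProdFinEquiv_symm (ht : 0 < t) :
    Function.Surjective (fun j : Fin (t * n) => (finProdFinEquiv.symm j).2) :=
  fun i => ⟨finProdFinEquiv (⟨0, ht⟩, i), by simp⟩

lemma repMap_injective (ht : 0 < t) : Function.Injective (repMap F t n) := by
  rw [repMap_eq_funLeft]
  exact LinearMap.funLeft_injective_of_surjective _ _ _ (surjective_snd_finProdFinEquiv_symm ht)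

lemma wt_repMap (c : Fin n → F) : wt (repMap F t n c) = t * wt c := by
  have hsupp : {j | repMap F t n c j ≠ 0} =
      finProdFinEquiv.symm ⁻¹' ((Set.univ : Set (Fin t)) ×ˢ {i | c i ≠ 0}) := by
    rw [Set.univ_prod]; rfl
  rw [wt, hsupp, Set.ncard_preimage_of_injective_subset_range finProdFinEquiv.symm.injective
    (by simp), Set.ncard_prod, Set.ncard_univ, Nat.card_fin, wt]

lemma finrank_map_repMap (ht : 0 < t) (C : Submodule F (Fin n → F)) :
    Module.finrank F (C.map (repMap F t n)) = Module.finrank F C :=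
  (Submodule.equivMapOfInjective _ (repMap_injective ht) C).finrank_eq.symm

lemma IsMinimalCode.map_repMap (ht : 0 < t) {C : Submodule F (Fin n → F)}
    (hmin : IsMinimalCode C) : IsMinimalCode (C.map (repMap F t n)) := by
  rw [repMap_eq_funLeft]
  exact hmin.map_funLeft (surjective_snd_finProdFinEquiv_symm ht)

lemma mul_dvd_wt_of_mem_map_repMap {Δ : ℕ} {C : Submodule F (Fin n → F)}
    (hdiv : ∀ c ∈ C, Δ ∣ wt c) : ∀ c ∈ C.map (repMap F t n), t * Δ ∣ wt c := by
  rintro _ ⟨c, hc, rfl⟩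
  rw [wt_repMap]
  exact mul_dvd_mul_left t (hdiv c hc)

end Repetition

section MinimalLength

variable {F : Type*} [Field F] {n k Δ : ℕ}

lemma mDiv_le (C : Submodule F (Fin n → F)) (hk : Module.finrank F C = k)
    (hmin : IsMinimalCode C) (hdiv : ∀ c ∈ C, Δ ∣ wt c) : mDiv F k Δ ≤ n :=
  Nat.sInf_le ⟨C, hk, hmin, hdiv⟩

-- `C` only witnesses that the infimum defining `mDiv` is not the junk value `sInf ∅ = 0`.
lemma exists_code_of_length_mDiv (C : Submodule F (Fin n → F)) (hk : Module.finrank F C = k)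
    (hmin : IsMinimalCode C) (hdiv : ∀ c ∈ C, Δ ∣ wt c) :
    ∃ C' : Submodule F (Fin (mDiv F k Δ) → F),
      Module.finrank F C' = k ∧ IsMinimalCode C' ∧ ∀ c ∈ C', Δ ∣ wt c :=
  Nat.sInf_mem (s := {m | ∃ C : Submodule F (Fin m → F),
    Module.finrank F C = k ∧ IsMinimalCode C ∧ ∀ c ∈ C, Δ ∣ wt c}) ⟨n, C, hk, hmin, hdiv⟩

lemma mDiv_le_mDiv_of_dvd {Δ' : ℕ} (hΔ : Δ ∣ Δ') (C : Submodule F (Fin n → F))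
    (hk : Module.finrank F C = k) (hmin : IsMinimalCode C) (hdiv : ∀ c ∈ C, Δ' ∣ wt c) :
    mDiv F k Δ ≤ mDiv F k Δ' := by
  obtain ⟨C', hk', hmin', hdiv'⟩ := exists_code_of_length_mDiv C hk hmin hdiv
  exact mDiv_le C' hk' hmin' fun c hc => hΔ.trans (hdiv' c hc)

lemma mDiv_mul_le {t : ℕ} (ht : 0 < t) (C : Submodule F (Fin n → F))
    (hk : Module.finrank F C = k) (hmin : IsMinimalCode C) (hdiv : ∀ c ∈ C, Δ ∣ wt c) :
    mDiv F k (t * Δ) ≤ t * mDiv F k Δ := by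
  obtain ⟨C', hk', hmin', hdiv'⟩ := exists_code_of_length_mDiv C hk hmin hdiv
  exact mDiv_le (C'.map (repMap F t _)) ((finrank_map_repMap ht C').trans hk')
    (hmin'.map_repMap ht) (mul_dvd_wt_of_mem_map_repMap hdiv')

end MinimalLength

theorem repetition_of_divisible_minimal_code_general
    (n k t Δ : ℕ) (ht : 0 < t) (hΔ : 0 < Δ)
    (F : Type*) [Field F]
    (C : Submodule F (Fin n → F)) (hk : Module.finrank F C = k)
    (hmin : IsMinimalCode C) (hdiv : ∀ c ∈ C, Δ ∣ wt c) :
    Module.finrank F (C.map (repMap F t n)) = k ∧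
    IsMinimalCode (C.map (repMap F t n)) ∧
    (∀ c ∈ C.map (repMap F t n), (t * Δ) ∣ wt c) ∧
    mDiv F k Δ ≤ mDiv F k (t * Δ) ∧ mDiv F k (t * Δ) ≤ t * mDiv F k Δ ∧
    mDiv F k 1 ≤ mDiv F k Δ ∧ mDiv F k Δ ≤ Δ * mDiv F k 1 := by
  have hk' : Module.finrank F (C.map (repMap F t n)) = k := (finrank_map_repMap ht C).trans hk
  have hmin' : IsMinimalCode (C.map (repMap F t n)) := hmin.map_repMap ht
  have hdiv' : ∀ c ∈ C.map (repMap F t n), t * Δ ∣ wt c := mul_dvd_wt_of_mem_map_repMap hdiv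
  have hdiv_one : ∀ c ∈ C, 1 ∣ wt c := fun c _ => one_dvd _
  refine ⟨hk', hmin', hdiv', mDiv_le_mDiv_of_dvd (dvd_mul_left Δ t) _ hk' hmin' hdiv',
    mDiv_mul_le ht C hk hmin hdiv, mDiv_le_mDiv_of_dvd (one_dvd Δ) C hk hmin hdiv, ?_⟩
  simpa using mDiv_mul_le hΔ C hk hmin hdiv_one

/-- Let `q` be a prime power, `Δ` and `t` positive integers, and let `C` be a `Δ`-divisible
minimal linear `[n,k]_q` code. Then the `t`-fold repetition of `C` is a `(t·Δ)`-divisible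
minimal linear `[t·n,k]_q` code. In particular `m(k,q;Δ) ≤ m(k,q;t·Δ) ≤ t·m(k,q;Δ)` and
`m(k,q) ≤ m(k,q;Δ) ≤ Δ·m(k,q)`. -/
theorem repetition_of_divisible_minimal_code
    (q n k t Δ : ℕ) (hq : IsPrimePow q) (ht : 0 < t) (hΔ : 0 < Δ)
    (F : Type*) [Field F] [Fintype F] (hF : Fintype.card F = q)
    (C : Submodule F (Fin n → F)) (hk : Module.finrank F C = k)
    (hmin : IsMinimalCode C) (hdiv : ∀ c ∈ C, Δ ∣ wt c) :
    Module.finrank F (C.map (repMap F t n)) = k ∧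
    IsMinimalCode (C.map (repMap F t n)) ∧
    (∀ c ∈ C.map (repMap F t n), (t * Δ) ∣ wt c) ∧
    mDiv F k Δ ≤ mDiv F k (t * Δ) ∧ mDiv F k (t * Δ) ≤ t * mDiv F k Δ ∧
    mDiv F k 1 ≤ mDiv F k Δ ∧ mDiv F k Δ ≤ Δ * mDiv F k 1 :=
  repetition_of_divisible_minimal_code_general n k t Δ ht hΔ F C hk hmin hdiv
end

section
/- Let q be a prime power and Δ, t positive integers with gcd(t,q) = 1. Then m(k,q;t·Δ) = t·m(k,q;Δ), i.e., the minimum length of a (t·Δ)-divisible minimal k-dimensional code over F_q equals t times the minimum length of a Δ-divisible minimal k-dimensional code over F_q. -/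
/-!
Repeating every coordinate `t` times multiplies all weights by `t` and preserves dimension and
minimality, so `m(k,q;tΔ) ≤ t·m(k,q;Δ)`.

Conversely, let `C` be a code whose weights are divisible by `t`, with `gcd(t,q) = 1`, and group
the coordinates on which `C` is not identically zero according to the set of codewords vanishing
there. Fix such a coordinate `i₀` and compare the weight sums over the affine slice `c i₀ = 1` and
over the subspace `c i₀ = 0`. A coordinate outside the class of `i₀` contributes equally to both
(translate by a codeword with `x i₀ = 1`, `x i = 0`), one inside contributes the size of the slice,
a power of `q`, to the first sum only. Hence `t` divides the size of every class (Ward), and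
keeping a `1/t` share of each class gives a code of length at most `n/t` with the same dimension,
still minimal, and with all weights divided by `t`.
-/

open Finset Function

theorem exists_prod_equiv_of_dvd_card_fiber {α β : Type*} [Fintype α] [Fintype β]
    [DecidableEq β] (π : α → β) {t : ℕ} (h : ∀ b, t ∣ #{a | π a = b}) :
    ∃ (n : ℕ) (e : Fin t × Fin n ≃ α) (g : Fin n → β), ∀ p, π (e p) = g p.2 := by
  let m b := #{a | π a = b} / t
  let ε b : {a // π a = b} ≃ Fin t × Fin (m b) :=
    Fintype.equivOfCardEq (by simp [Fintype.card_subtype, m, Nat.mul_div_cancel' (h b)])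
  let e : Fin t × (Σ b, Fin (m b)) ≃ α :=
    (Equiv.prodComm _ _).trans <| (Equiv.sigmaProdDistrib _ _).trans <|
      (Equiv.sigmaCongrRight fun b => (Equiv.prodComm _ _).trans (ε b).symm).trans <|
        Equiv.sigmaFiberEquiv π
  let σ := (Fintype.equivFin (Σ b, Fin (m b))).symm
  exact ⟨_, (Equiv.prodCongrRight fun _ => σ).trans e, fun j => (σ j).1,
    fun p => ((ε (σ p.2).1).symm (p.1, (σ p.2).2)).2⟩

theorem sInf_eq_mul_sInf_of_mul_mem {S T : Set ℕ} {t : ℕ} (hST : ∀ n ∈ S, t * n ∈ T)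
    (hTS : ∀ n ∈ T, ∃ m ∈ S, t * m ≤ n) : sInf T = t * sInf S := by
  rcases S.eq_empty_or_nonempty with rfl | hS
  · have hT : T = ∅ := Set.eq_empty_of_forall_notMem fun n hn => by simpa using hTS n hn
    simp [hT]
  · have hT : T.Nonempty := ⟨_, hST _ (Nat.sInf_mem hS)⟩
    refine le_antisymm (Nat.sInf_le (hST _ (Nat.sInf_mem hS))) ?_
    obtain ⟨m, hm, hle⟩ := hTS _ (Nat.sInf_mem hT)
    exact (Nat.mul_le_mul_left t (Nat.sInf_le hm)).trans hle

section Weight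
variable {ι κ F : Type*} [Zero F]

theorem wt_eq_ncard_support (c : ι → F) : wt c = (support c).ncard := rfl

theorem wt_eq_card_filter [Fintype ι] [DecidableEq F] (c : ι → F) :
    wt c = #{i | c i ≠ 0} := by
  rw [wt, Set.ncard_eq_toFinset_card']
  simp

theorem sum_wt_eq_sum_card_filter [Fintype ι] [DecidableEq F] (s : Finset (ι → F)) :
    ∑ c ∈ s, wt c = ∑ i, #{c ∈ s | c i ≠ 0} := by
  simp_rw [wt_eq_card_filter]
  exact sum_card_bipartiteAbove_eq_sum_card_bipartiteBelow (r := fun (c : ι → F) i => c i ≠ 0)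

theorem wt_comp_of_injective {f : κ → ι} (hf : Injective f) {c : ι → F}
    (hc : support c ⊆ Set.range f) : wt (c ∘ f) = wt c :=
  Set.ncard_preimage_of_injective_subset_range hf hc

theorem wt_comp_snd (α : Type*) [Fintype α] (c : ι → F) :
    wt (c ∘ Prod.snd : α × ι → F) = Fintype.card α * wt c := by
  have : support (c ∘ Prod.snd : α × ι → F) = Set.univ ×ˢ support c := by
    ext; simp
  rw [wt_eq_ncard_support, this, Set.ncard_prod, Set.ncard_univ, Nat.card_eq_fintype_card]
  rfl

end Weight

section Pullback
variable {ι κ F : Type*} [Field F] (C : Submodule F (ι → F))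

def vanishingAt (i : ι) : Submodule F (ι → F) := C ⊓ LinearMap.ker (LinearMap.proj i)

def CoversCoords (f : κ → ι) : Prop :=
  ∀ c ∈ C, ∀ i, c i ≠ 0 → ∃ j, vanishingAt C (f j) = vanishingAt C i

variable {C} {f : κ → ι}

theorem mem_vanishingAt {i : ι} {c : ι → F} : c ∈ vanishingAt C i ↔ c ∈ C ∧ c i = 0 := by
  simp [vanishingAt]

theorem vanishingAt_eq_iff {i j : ι} :
    vanishingAt C i = vanishingAt C j ↔ ∀ c ∈ C, (c i = 0 ↔ c j = 0) := by
  simp only [SetLike.ext_iff, mem_vanishingAt]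
  exact ⟨fun h c hc => by simpa [hc] using h c, fun h c => and_congr_right fun hc => h c hc⟩

theorem CoversCoords.support_comp_subset_iff (hf : CoversCoords C f)
    {x y : ι → F} (hx : x ∈ C) (hy : y ∈ C) :
    support (x ∘ f) ⊆ support (y ∘ f) ↔ support x ⊆ support y := by
  refine ⟨fun h i hi => ?_, fun h => Set.preimage_mono h⟩
  obtain ⟨j, hj⟩ := hf x hx i hi
  have hxy : y (f j) ≠ 0 := h (show x (f j) ≠ 0 from
    fun h0 => hi ((vanishingAt_eq_iff.mp hj x hx).mp h0))
  exact fun h0 => hxy ((vanishingAt_eq_iff.mp hj y hy).mpr h0)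

theorem CoversCoords.comp_eq_zero_iff (hf : CoversCoords C f) {x : ι → F} (hx : x ∈ C) :
    x ∘ f = 0 ↔ x = 0 := by
  refine ⟨fun h => ?_, fun h => by simp [h]⟩
  have := (hf.support_comp_subset_iff hx C.zero_mem).mp (by simp [h])
  simpa [support_subset_iff'] using this

theorem CoversCoords.finrank_map (hf : CoversCoords C f) :
    Module.finrank F (C.map (LinearMap.funLeft F F f)) = Module.finrank F C := by
  rw [← LinearMap.range_domRestrict]
  refine LinearMap.finrank_range_of_inj fun x y hxy => ?_
  change (x : ι → F) ∘ f = (y : ι → F) ∘ f at hxy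
  have := (hf.comp_eq_zero_iff (C.sub_mem x.2 y.2)).mp (by rw [Pi.sub_comp, hxy, sub_self])
  exact Subtype.ext (sub_eq_zero.mp this)

theorem IsMinimalCode.map_funLeft_s5 (hC : IsMinimalCode C) (hf : CoversCoords C f) :
    IsMinimalCode (C.map (LinearMap.funLeft F F f)) := by
  rintro _ ⟨c, hc, rfl⟩ hc0 _ ⟨u, hu, rfl⟩ hu0 hsub
  change c ∘ f ≠ 0 at hc0
  change u ∘ f ≠ 0 at hu0
  rw [Ne, hf.comp_eq_zero_iff hc] at hc0
  rw [Ne, hf.comp_eq_zero_iff hu] at hu0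
  have := hC c hc hc0 u hu hu0 ((hf.support_comp_subset_iff hu hc).mp hsub)
  exact congrArg (f ⁻¹' ·) this

end Pullback

section DivisibleMinimal
variable {ι κ F : Type*} [Field F]

def IsDivisibleMinimalCode (C : Submodule F (ι → F)) (k Δ : ℕ) : Prop :=
  Module.finrank F C = k ∧ IsMinimalCode C ∧ ∀ c ∈ C, Δ ∣ wt c

variable (F) in
def codeLengths (k Δ : ℕ) : Set ℕ :=
  {n | ∃ C : Submodule F (Fin n → F), IsDivisibleMinimalCode C k Δ}

variable (F) in
theorem mDiv_eq_sInf_codeLengths (k Δ : ℕ) :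
    mDiv F k Δ = sInf (codeLengths F k Δ) := rfl

variable {C : Submodule F (ι → F)} {k Δ Δ' : ℕ}

theorem IsDivisibleMinimalCode.map_funLeft_s5 (hC : IsDivisibleMinimalCode C k Δ) {f : κ → ι}
    (hf : CoversCoords C f) (hwt : ∀ c ∈ C, Δ ∣ wt c → Δ' ∣ wt (c ∘ f)) :
    IsDivisibleMinimalCode (C.map (LinearMap.funLeft F F f)) k Δ' := by
  obtain ⟨hk, hmin, hdvd⟩ := hC
  refine ⟨hf.finrank_map.trans hk, hmin.map_funLeft_s5 hf, ?_⟩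
  rintro _ ⟨c, hc, rfl⟩
  exact hwt c hc (hdvd c hc)

theorem CoversCoords.of_surjective {f : κ → ι} (hf : Surjective f) : CoversCoords C f :=
  fun _ _ i _ => (hf i).imp fun _ hj => by rw [hj]

theorem IsDivisibleMinimalCode.card_mem_codeLengths [Fintype ι]
    (hC : IsDivisibleMinimalCode C k Δ) : Fintype.card ι ∈ codeLengths F k Δ := by
  let e := (Fintype.equivFin ι).symm
  refine ⟨_, hC.map_funLeft_s5 (CoversCoords.of_surjective e.surjective) fun c _ h => ?_⟩
  rwa [wt_comp_of_injective e.injective (by simp)]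

theorem IsDivisibleMinimalCode.map_funLeft_snd (hC : IsDivisibleMinimalCode C k Δ) (α : Type*)
    [Fintype α] [Nonempty α] :
    IsDivisibleMinimalCode (C.map (LinearMap.funLeft F F (Prod.snd : α × ι → ι)))
      k (Fintype.card α * Δ) :=
  hC.map_funLeft_s5 (CoversCoords.of_surjective Prod.snd_surjective) fun c _ h => by
    rw [wt_comp_snd]
    exact mul_dvd_mul_left _ h

end DivisibleMinimal

section ClassSize
variable {ι F : Type*} [Field F] {C : Submodule F (ι → F)} {i₀ : ι}

theorem exists_mem_apply_eq_one_apply_eq_zero (hi₀ : ∃ c ∈ C, c i₀ ≠ 0) {i : ι}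
    (hi : vanishingAt C i ≠ vanishingAt C i₀) : ∃ x ∈ C, x i₀ = 1 ∧ x i = 0 := by
  suffices ∃ x ∈ C, x i₀ ≠ 0 ∧ x i = 0 by
    obtain ⟨x, hx, hx₀, hxi⟩ := this
    exact ⟨(x i₀)⁻¹ • x, C.smul_mem _ hx, by simp [hx₀], by simp [hxi]⟩
  obtain ⟨c, hc, hci⟩ : ∃ c ∈ C, ¬(c i = 0 ↔ c i₀ = 0) := by
    simpa [vanishingAt_eq_iff] using hi
  by_cases h : c i = 0
  · exact ⟨c, hc, fun h₀ => hci (iff_of_true h h₀), h⟩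
  · obtain ⟨d, hd, hd₀⟩ := hi₀
    have hc₀ : c i₀ = 0 := by tauto
    refine ⟨d - (d i / c i) • c, C.sub_mem hd (C.smul_mem _ hc), by simpa [hc₀], ?_⟩
    simp [div_mul_cancel₀ _ h]

variable [Fintype ι] [Fintype F] [DecidableEq F]

open scoped Classical in
noncomputable def coordFiber (C : Submodule F (ι → F)) (i : ι) (a : F) : Finset (ι → F) :=
  {c | c ∈ C ∧ c i = a}

theorem mem_coordFiber {a : F} {c : ι → F} : c ∈ coordFiber C i₀ a ↔ c ∈ C ∧ c i₀ = a := by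
  simp [coordFiber]

theorem card_filter_coordFiber_one_eq {x₀ : ι → F} (hx₀ : x₀ ∈ C) (hx₀i₀ : x₀ i₀ = 1)
    (p : (ι → F) → Prop) [DecidablePred p] (hp : ∀ c, p (c + x₀) ↔ p c) :
    #{c ∈ coordFiber C i₀ 1 | p c} = #{c ∈ coordFiber C i₀ 0 | p c} := by
  refine card_nbij' (· - x₀) (· + x₀) ?_ ?_ (fun c _ => sub_add_cancel c x₀)
    (fun c _ => add_sub_cancel_right c x₀)
  · intro c hc
    rw [mem_coe, mem_filter, mem_coordFiber] at hc ⊢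
    refine ⟨⟨C.sub_mem hc.1.1 hx₀, by simp [hc.1.2, hx₀i₀]⟩, ?_⟩
    simpa [← hp (c - x₀)] using hc.2
  · intro c hc
    rw [mem_coe, mem_filter, mem_coordFiber] at hc ⊢
    exact ⟨⟨C.add_mem hc.1.1 hx₀, by simp [hc.1.2, hx₀i₀]⟩, (hp c).mpr hc.2⟩

theorem card_filter_coordFiber_one_ne_zero (hi₀ : ∃ c ∈ C, c i₀ ≠ 0) (i : ι) :
    #{c ∈ coordFiber C i₀ 1 | c i ≠ 0} = #{c ∈ coordFiber C i₀ 0 | c i ≠ 0} +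
      if vanishingAt C i = vanishingAt C i₀ then #(coordFiber C i₀ 1) else 0 := by
  split_ifs with hi
  · have h := vanishingAt_eq_iff.mp hi
    rw [filter_true_of_mem, filter_false_of_mem, card_empty, zero_add]
    · intro c hc
      rw [mem_coordFiber] at hc
      exact not_not.mpr ((h c hc.1).mpr hc.2)
    · intro c hc h0
      rw [mem_coordFiber] at hc
      exact one_ne_zero (hc.2 ▸ (h c hc.1).mp h0)
  · obtain ⟨x₀, hx₀, hx₀i₀, hx₀i⟩ := exists_mem_apply_eq_one_apply_eq_zero hi₀ hi
    rw [add_zero]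
    exact card_filter_coordFiber_one_eq hx₀ hx₀i₀ _ fun c => by simp [hx₀i]

theorem sum_wt_coordFiber_one (hi₀ : ∃ c ∈ C, c i₀ ≠ 0) :
    ∑ c ∈ coordFiber C i₀ 1, wt c = ∑ c ∈ coordFiber C i₀ 0, wt c +
      #{i | vanishingAt C i = vanishingAt C i₀} * #(coordFiber C i₀ 1) := by
  simp_rw [sum_wt_eq_sum_card_filter, card_filter_coordFiber_one_ne_zero hi₀, sum_add_distrib,
    ← sum_filter, sum_const, smul_eq_mul]

theorem card_coordFiber_one (hi₀ : ∃ c ∈ C, c i₀ ≠ 0) :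
    #(coordFiber C i₀ 1) = Fintype.card F ^ Module.finrank F (vanishingAt C i₀) := by
  obtain ⟨x, hx, hxi₀⟩ := hi₀
  have h := card_filter_coordFiber_one_eq (i₀ := i₀) (C.smul_mem (x i₀)⁻¹ hx) (by simp [hxi₀])
    (fun _ => True) fun _ => Iff.rfl
  rw [filter_true, filter_true] at h
  rw [h, ← Nat.card_eq_fintype_card, ← Module.natCard_eq_pow_finrank, ← SetLike.coe_sort_coe,
    Nat.card_coe_set_eq, ← Set.ncard_coe_finset]
  congr 1
  ext c
  simp [mem_coordFiber, mem_vanishingAt]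

theorem dvd_card_vanishingAt_eq {t : ℕ} (hcop : t.Coprime (Fintype.card F))
    (hdvd : ∀ c ∈ C, t ∣ wt c) (hi₀ : ∃ c ∈ C, c i₀ ≠ 0) :
    t ∣ #{i | vanishingAt C i = vanishingAt C i₀} := by
  have hsum : ∀ a, t ∣ ∑ c ∈ coordFiber C i₀ a, wt c :=
    fun a => dvd_sum fun c hc => hdvd c (mem_coordFiber.mp hc).1
  have h := (Nat.dvd_add_right (hsum 0)).mp (sum_wt_coordFiber_one hi₀ ▸ hsum 1)
  rw [card_coordFiber_one hi₀] at h
  exact (hcop.pow_right _).dvd_of_dvd_mul_right h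

end ClassSize

section Ward
variable {ι F : Type*} [Field F] [Fintype F] [Fintype ι] {C : Submodule F (ι → F)} {t : ℕ}

open scoped Classical in
theorem card_subtype_filter_vanishingAt_eq {i₀ : ι} (hi₀ : ∃ c ∈ C, c i₀ ≠ 0) :
    #{a : {i // ∃ c ∈ C, c i ≠ 0} | vanishingAt C a = vanishingAt C i₀} =
      #{i | vanishingAt C i = vanishingAt C i₀} := by
  simp only [← Fintype.card_subtype]
  refine Fintype.card_congr (Equiv.subtypeSubtypeEquivSubtype
    (q := fun i => vanishingAt C i = vanishingAt C i₀) fun hi => ?_)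
  obtain ⟨c, hc, hci₀⟩ := hi₀
  exact ⟨c, hc, fun h => hci₀ ((vanishingAt_eq_iff.mp hi c hc).mp h)⟩

theorem exists_repetition_of_dvd_wt (hcop : t.Coprime (Fintype.card F))
    (hdvd : ∀ c ∈ C, t ∣ wt c) :
    ∃ (n : ℕ) (f : Fin t × Fin n → ι), Injective f ∧ (∀ c ∈ C, support c ⊆ Set.range f) ∧
      ∀ a b j, vanishingAt C (f (a, j)) = vanishingAt C (f (b, j)) := by
  classical
  have : Fintype (Submodule F (ι → F)) := Fintype.ofFinite _
  obtain ⟨n, e, g, hg⟩ := exists_prod_equiv_of_dvd_card_fiber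
    (fun a : {i // ∃ c ∈ C, c i ≠ 0} => vanishingAt C a) fun V => by
      by_cases hV : ∃ a : {i // ∃ c ∈ C, c i ≠ 0}, vanishingAt C a = V
      · obtain ⟨a, rfl⟩ := hV
        rw [card_subtype_filter_vanishingAt_eq a.2]
        exact dvd_card_vanishingAt_eq hcop hdvd a.2
      · simp only [not_exists] at hV
        simp [hV]
  refine ⟨n, fun p => e p, Subtype.val_injective.comp e.injective, fun c hc i hi => ?_,
    fun a b j => (hg (a, j)).trans (hg (b, j)).symm⟩
  exact ⟨e.symm ⟨i, c, hc, hi⟩, by simp⟩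

end Ward

section Puncture
variable {ι F : Type*} [Field F] [Fintype F] [Fintype ι] {C : Submodule F (ι → F)} {k t Δ : ℕ}

theorem IsDivisibleMinimalCode.exists_mem_codeLengths_of_mul
    (hC : IsDivisibleMinimalCode C k (t * Δ)) (ht : 0 < t) (hcop : t.Coprime (Fintype.card F)) :
    ∃ m ∈ codeLengths F k Δ, t * m ≤ Fintype.card ι := by
  obtain ⟨n, f, hf, hrange, hclass⟩ :=
    exists_repetition_of_dvd_wt hcop fun c hc => (dvd_mul_right t Δ).trans (hC.2.2 c hc)
  let f₀ j := f (⟨0, ht⟩, j)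
  have hcover : CoversCoords C f₀ := by
    intro c hc i hi
    obtain ⟨⟨a, j⟩, rfl⟩ := hrange c hc hi
    exact ⟨j, hclass _ _ j⟩
  have hwt : ∀ c ∈ C, wt c = t * wt (c ∘ f₀) := by
    intro c hc
    have hsnd := wt_comp_snd (Fin t) (c ∘ f₀)
    rw [Fintype.card_fin] at hsnd
    rw [← wt_comp_of_injective hf (hrange c hc), ← hsnd, wt_eq_ncard_support,
      wt_eq_ncard_support]
    congr 1
    ext ⟨a, j⟩
    exact not_congr (vanishingAt_eq_iff.mp (hclass a ⟨0, ht⟩ j) c hc)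
  have hC' := hC.map_funLeft_s5 hcover fun c hc h => Nat.dvd_of_mul_dvd_mul_left ht (hwt c hc ▸ h)
  refine ⟨n, by simpa using hC'.card_mem_codeLengths, ?_⟩
  calc t * n = Fintype.card (Fin t × Fin n) := by simp
    _ ≤ Fintype.card ι := Fintype.card_le_of_injective f hf

end Puncture

theorem mDiv_coprime_mul_general
    (q k t Δ : ℕ) (ht : 0 < t)
    (hcop : Nat.gcd t q = 1)
    (F : Type*) [Field F] [Fintype F] (hF : Fintype.card F = q) :
    mDiv F k (t * Δ) = t * mDiv F k Δ := by
  subst hF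
  have : Nonempty (Fin t) := Fin.pos_iff_nonempty.mp ht
  rw [mDiv_eq_sInf_codeLengths, mDiv_eq_sInf_codeLengths]
  refine sInf_eq_mul_sInf_of_mul_mem (fun n ⟨C, hC⟩ => ?_) fun n ⟨C, hC⟩ => ?_
  · simpa using (hC.map_funLeft_snd (Fin t)).card_mem_codeLengths
  · simpa using hC.exists_mem_codeLengths_of_mul ht hcop

/-- Let `q` be a prime power and `Δ`, `t` positive integers with `gcd(t,q) = 1`.
Then `m(k,q;t·Δ) = t·m(k,q;Δ)`. -/
theorem mDiv_coprime_mul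
    (q k t Δ : ℕ) (hq : IsPrimePow q) (ht : 0 < t) (hΔ : 0 < Δ)
    (hcop : Nat.gcd t q = 1)
    (F : Type*) [Field F] [Fintype F] (hF : Fintype.card F = q) :
    mDiv F k (t * Δ) = t * mDiv F k Δ :=
  mDiv_coprime_mul_general q k t Δ ht hcop F hF
end

section
/- For every integer k ≥ 2 we have m(k,2;2^{k-2}) = 2^k - 1, i.e., the minimum possible length of a 2^{k-2}-divisible minimal k-dimensional binary linear code is 2^k - 1, attained by the binary simplex code of dimension k. -/
/-!
The simplex code has all nonzero weights equal to `2^(k-1)`, and equal-size supports cannot be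
strictly nested, so it is minimal; this gives the upper bound.

For the lower bound, every nonzero coordinate of a binary code of dimension `k` is nonzero in
exactly half of its codewords, so the total weight is `2^(k-1)` times the number of nonzero
coordinates. Suppose a minimal `Δ`-divisible code, `Δ = 2^(k-2)`, had a codeword `v` of weight `Δ`.
For any other nonzero codeword `u`, `wt (u + v) + 2 |supp u ∩ supp v| = wt u + wt v` forces
`2 |supp u ∩ supp v| ∈ {0, Δ, 2Δ}`, and minimality excludes `0` (then `supp v ⊆ supp (u + v)`) and
`2Δ` (then `supp v ⊆ supp u`). So `u ↦ u + v` pairs the codewords other than `0, v` into pairs of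
equal weight, and the total weight is `≡ Δ [MOD 2Δ]`, contradicting its divisibility by
`2^(k-1)`. Hence every nonzero weight is at least `2^(k-1)`, and summing gives
`(2^k - 1) 2^(k-1) ≤ n 2^(k-1)`.
-/

open Finset Matrix

section Weight

variable {ι F : Type*}

lemma wt_eq_card [Fintype ι] [Zero F] [DecidableEq F] (c : ι → F) : wt c = #{i | c i ≠ 0} := by
  rw [wt, ← Set.ncard_coe_finset, coe_filter_univ]

lemma wt_eq_zero_iff [Finite ι] [Zero F] {c : ι → F} : wt c = 0 ↔ c = 0 := by
  rw [wt, Set.ncard_eq_zero]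
  exact Function.support_eq_empty_iff

lemma wt_zero [Zero F] : wt (0 : ι → F) = 0 := by
  simp [wt]

lemma wt_pos [Finite ι] [Zero F] {c : ι → F} (hc : c ≠ 0) : 0 < wt c :=
  Nat.pos_of_ne_zero (wt_eq_zero_iff.not.mpr hc)

lemma wt_mul_le_right [Finite ι] [MulZeroClass F] (u v : ι → F) : wt (u * v) ≤ wt v :=
  Set.ncard_le_ncard fun _ ↦ right_ne_zero_of_mul

lemma eq_of_support_eq_zmod_two {u v : ι → ZMod 2} (h : {i | u i ≠ 0} = {i | v i ≠ 0}) :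
    u = v :=
  funext fun i ↦ by
    have key : ∀ a b : ZMod 2, (a ≠ 0 ↔ b ≠ 0) → a = b := by decide
    exact key _ _ (Set.ext_iff.mp h i)

lemma wt_add_add_two_mul_wt_mul [Fintype ι] (u v : ι → ZMod 2) :
    wt (u + v) + 2 * wt (u * v) = wt u + wt v := by
  simp only [wt_eq_card, card_filter, mul_sum, ← sum_add_distrib]
  have key : ∀ a b : ZMod 2, ((if a + b ≠ 0 then 1 else 0) + 2 * if a * b ≠ 0 then 1 else 0) =
      (if a ≠ 0 then 1 else 0) + if b ≠ 0 then 1 else 0 := by decide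
  exact sum_congr rfl fun i _ ↦ key (u i) (v i)

end Weight

lemma AddMonoidHom.two_mul_card_filter_ne_zero {G : Type*} [AddCommGroup G] [Fintype G]
    (ψ : G →+ ZMod 2) (hψ : ψ ≠ 0) : 2 * #{g | ψ g ≠ 0} = Fintype.card G := by
  obtain ⟨w, hw⟩ : ∃ w, ψ w ≠ 0 := DFunLike.ne_iff.mp hψ
  have hw1 : ψ w = 1 := (by decide : ∀ a : ZMod 2, a ≠ 0 → a = 1) _ hw
  have key : ∀ a : ZMod 2, a = 0 ↔ 1 + a ≠ 0 := by decide
  have htranslate : #{g | ψ g = 0} = #{g | ψ g ≠ 0} :=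
    card_equiv (Equiv.addLeft w) fun g ↦ by simpa [hw1] using key (ψ g)
  have hsplit := card_filter_add_card_filter_not (s := univ) (fun g ↦ ψ g = 0)
  rw [card_univ, htranslate] at hsplit
  simpa only [two_mul, ne_eq] using hsplit

section Code

variable {ι : Type*}

lemma isMinimalCode_of_forall_wt_eq [Finite ι] {F : Type*} [Semiring F]
    {C : Submodule F (ι → F)} {w : ℕ} (hC : ∀ c ∈ C, c ≠ 0 → wt c = w) : IsMinimalCode C :=
  fun c hc hc0 u hu hu0 hsub ↦ Set.eq_of_subset_of_ncard_le hsub (by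
    change wt c ≤ wt u
    rw [hC c hc hc0, hC u hu hu0])

variable {C : Submodule (ZMod 2) (ι → ZMod 2)} [Fintype C]

lemma two_mul_card_filter_apply_ne_zero {i : ι} (hi : ∃ c : C, (c : ι → ZMod 2) i ≠ 0) :
    2 * #{c : C | (c : ι → ZMod 2) i ≠ 0} = Fintype.card C :=
  ((LinearMap.proj i ∘ₗ C.subtype).toAddMonoidHom).two_mul_card_filter_ne_zero
    (DFunLike.ne_iff.mpr hi)

variable [Fintype ι]

lemma two_mul_sum_wt :
    2 * ∑ c : C, wt (c : ι → ZMod 2) =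
      Fintype.card C * #{i | ∃ c : C, (c : ι → ZMod 2) i ≠ 0} := by
  have hcols : ∑ c : C, wt (c : ι → ZMod 2) = ∑ i, #{c : C | (c : ι → ZMod 2) i ≠ 0} := by
    simp only [wt_eq_card, card_filter]
    exact sum_comm
  rw [hcols, mul_sum, card_filter, mul_sum]
  refine sum_congr rfl fun i _ ↦ ?_
  split_ifs with hi
  · rw [two_mul_card_filter_apply_ne_zero hi, mul_one]
  · simp_all

end Code

section Minimal

variable {ι : Type*} [Fintype ι] {C : Submodule (ZMod 2) (ι → ZMod 2)}

lemma IsMinimalCode.wt_add_eq (hC : IsMinimalCode C) {u v : ι → ZMod 2} (hu : u ∈ C)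
    (hv : v ∈ C) (hu0 : u ≠ 0) (hv0 : v ≠ 0) (huv : u ≠ v) (hdvd : ∀ c ∈ C, wt v ∣ wt c) :
    wt (u + v) = wt u := by
  have hsum := wt_add_add_two_mul_wt_mul u v
  have hle := wt_mul_le_right u v
  have hpos := wt_pos hv0
  obtain ⟨r, hr⟩ : wt v ∣ 2 * wt (u * v) := by
    rw [show 2 * wt (u * v) = wt u + wt v - wt (u + v) by omega]
    exact Nat.dvd_sub (dvd_add (hdvd u hu) dvd_rfl) (hdvd _ (C.add_mem hu hv))
  have hr2 : r ≤ 2 := by nlinarith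
  interval_cases r
  · have hdisj : u * v = 0 := wt_eq_zero_iff.mp (by omega)
    have hsub : {i | v i ≠ 0} ⊆ {i | (u + v) i ≠ 0} := fun i hi ↦ by
      have hui : u i = 0 := (mul_eq_zero.mp (congrFun hdisj i)).resolve_right hi
      simpa [hui] using hi
    have huv0 : u + v ≠ 0 := by
      rwa [Ne, add_eq_zero_iff_eq_neg, ZModModule.neg_eq_self]
    have hvuv := eq_of_support_eq_zmod_two (hC _ (C.add_mem hu hv) huv0 v hv hv0 hsub)
    exact absurd (left_eq_add.mp (add_comm u v ▸ hvuv)) hu0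
  · omega
  · have hsupp : {i | (u * v) i ≠ 0} = {i | v i ≠ 0} :=
      Set.eq_of_subset_of_ncard_le (fun _ ↦ right_ne_zero_of_mul)
        (show wt v ≤ wt (u * v) by omega)
    have hsub : {i | v i ≠ 0} ⊆ {i | u i ≠ 0} := hsupp ▸ fun _ ↦ left_ne_zero_of_mul
    exact absurd (eq_of_support_eq_zmod_two (hC u hu hu0 v hv hv0 hsub)).symm huv

lemma IsMinimalCode.sum_wt_modEq [Fintype C] (hC : IsMinimalCode C) {v : ι → ZMod 2}
    (hv : v ∈ C) (hv0 : v ≠ 0) (hdvd : ∀ c ∈ C, wt v ∣ wt c) :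
    ∑ c : C, wt (c : ι → ZMod 2) ≡ wt v [MOD 2 * wt v] := by
  classical
  set v' : C := ⟨v, hv⟩
  have hv'0 : v' ≠ 0 := by simpa [v', ← Submodule.coe_eq_zero] using hv0
  let s : Finset C := univ \ {0, v'}
  have hpairs : ∑ c ∈ s, (wt (c : ι → ZMod 2) : ZMod (2 * wt v)) = 0 := by
    refine sum_involution (fun c _ ↦ c + v') (fun c hc ↦ ?_) (fun c _ _ h ↦ ?_)
      (fun c hc ↦ ?_) (fun c _ ↦ ?_)
    · simp only [s, mem_sdiff, mem_univ, mem_insert, mem_singleton, not_or, true_and] at hc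
      have hc0 : (c : ι → ZMod 2) ≠ 0 := by simpa using hc.1
      have hcv : (c : ι → ZMod 2) ≠ v := fun h ↦ hc.2 (Subtype.ext h)
      obtain ⟨r, hr⟩ := hdvd c c.2
      rw [Submodule.coe_add, hC.wt_add_eq c.2 hv hc0 hv0 hcv hdvd, ← Nat.cast_add, ← two_mul, hr,
        ← mul_assoc, Nat.cast_mul, ZMod.natCast_self, zero_mul]
    · exact hv'0 (left_eq_add.mp h.symm)
    · simp only [s, mem_sdiff, mem_univ, mem_insert, mem_singleton, not_or, true_and] at hc ⊢
      rw [add_eq_zero_iff_eq_neg, ZModModule.neg_eq_self, add_eq_right]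
      exact hc.symm
    · rw [add_assoc, ZModModule.add_self, add_zero]
  rw [← ZMod.natCast_eq_natCast_iff, Nat.cast_sum, ← sum_sdiff (subset_univ {0, v'}), hpairs,
    sum_pair hv'0.symm]
  simp [v', wt_zero]

end Minimal

section LowerBound

variable {ι : Type*} [Fintype ι] {C : Submodule (ZMod 2) (ι → ZMod 2)} {k : ℕ}

lemma sum_wt_eq_of_finrank_eq [Fintype C] (hk : 1 ≤ k) (hrank : Module.finrank (ZMod 2) C = k) :
    ∑ c : C, wt (c : ι → ZMod 2) = 2 ^ (k - 1) * #{i | ∃ c : C, (c : ι → ZMod 2) i ≠ 0} := by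
  have hcard : Fintype.card C = 2 * 2 ^ (k - 1) := by
    rw [Module.card_eq_pow_finrank (K := ZMod 2), ZMod.card, hrank, ← pow_succ',
      Nat.sub_add_cancel hk]
  have h := two_mul_sum_wt (C := C)
  rw [hcard, mul_assoc] at h
  exact Nat.eq_of_mul_eq_mul_left two_pos h

lemma IsMinimalCode.two_pow_pred_le_wt [Fintype C] (hC : IsMinimalCode C) (hk : 2 ≤ k)
    (hrank : Module.finrank (ZMod 2) C = k) (hdiv : ∀ c ∈ C, 2 ^ (k - 2) ∣ wt c)
    {c : ι → ZMod 2} (hc : c ∈ C) (hc0 : c ≠ 0) : 2 ^ (k - 1) ≤ wt c := by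
  have hpow : 2 ^ (k - 1) = 2 * 2 ^ (k - 2) := by rw [← pow_succ']; congr 1; omega
  obtain ⟨r, hr⟩ := hdiv c hc
  have hr0 : r ≠ 0 := by rintro rfl; exact (wt_pos hc0).ne' hr
  have hr1 : r ≠ 1 := by
    rintro rfl
    rw [mul_one] at hr
    have hmod := hC.sum_wt_modEq hc hc0 (hr ▸ hdiv)
    rw [sum_wt_eq_of_finrank_eq (by omega) hrank, hr, ← hpow, Nat.ModEq, Nat.mul_mod_right,
      Nat.mod_eq_of_lt (by omega)] at hmod
    exact (pow_pos two_pos _).ne hmod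
  rw [hr, hpow, mul_comm]
  exact Nat.mul_le_mul_left _ (by omega)

lemma card_sub_one_mul_le_sum_wt [Fintype C] {d : ℕ} (h : ∀ c ∈ C, c ≠ 0 → d ≤ wt c) :
    (Fintype.card C - 1) * d ≤ ∑ c : C, wt (c : ι → ZMod 2) := by
  classical
  rw [← sum_erase univ (f := fun c : C ↦ wt (c : ι → ZMod 2)) (a := 0) wt_zero, ← card_univ,
    ← card_erase_of_mem (mem_univ 0), ← smul_eq_mul]
  refine card_nsmul_le_sum _ _ _ fun c hc ↦ h c c.2 ?_
  simpa using ne_of_mem_erase hc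

theorem IsMinimalCode.two_pow_sub_one_le_card (hC : IsMinimalCode C) (hk : 2 ≤ k)
    (hrank : Module.finrank (ZMod 2) C = k) (hdiv : ∀ c ∈ C, 2 ^ (k - 2) ∣ wt c) :
    2 ^ k - 1 ≤ Fintype.card ι := by
  have : Fintype C := Fintype.ofFinite C
  have hcard : Fintype.card C = 2 ^ k := by
    rw [Module.card_eq_pow_finrank (K := ZMod 2), ZMod.card, hrank]
  refine Nat.le_of_mul_le_mul_right (c := 2 ^ (k - 1)) ?_ (pow_pos two_pos _)
  calc (2 ^ k - 1) * 2 ^ (k - 1) ≤ ∑ c : C, wt (c : ι → ZMod 2) :=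
        hcard ▸ card_sub_one_mul_le_sum_wt fun c hc hc0 ↦ hC.two_pow_pred_le_wt hk hrank hdiv hc hc0
    _ = 2 ^ (k - 1) * #{i | ∃ c : C, (c : ι → ZMod 2) i ≠ 0} :=
        sum_wt_eq_of_finrank_eq (by omega) hrank
    _ ≤ Fintype.card ι * 2 ^ (k - 1) := by
        rw [mul_comm]; exact Nat.mul_le_mul_right _ (card_le_univ _)

end LowerBound

lemma two_mul_card_dotProduct_ne_zero {n : Type*} [Fintype n] [DecidableEq n] {x : n → ZMod 2}
    (hx : x ≠ 0) : 2 * #{v : n → ZMod 2 | v ⬝ᵥ x ≠ 0} = 2 ^ Fintype.card n := by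
  obtain ⟨j, hj⟩ : ∃ j, x j ≠ 0 := Function.ne_iff.mp hx
  refine ((AddMonoidHom.mk' (· ⬝ᵥ x) fun v w ↦ add_dotProduct v w x).two_mul_card_filter_ne_zero
    ?_).trans (by simp)
  exact DFunLike.ne_iff.mpr ⟨Pi.single j 1, by simpa [single_dotProduct] using hj⟩

section Simplex

lemma card_ne_zero_vectors (k : ℕ) : Fintype.card {v : Fin k → ZMod 2 // v ≠ 0} = 2 ^ k - 1 := by
  rw [Fintype.card_subtype_compl, Fintype.card_subtype_eq, Fintype.card_fun, ZMod.card,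
    Fintype.card_fin]

/-- The rows of the generator matrix of the simplex code enumerate the nonzero vectors of `𝔽₂ᵏ`. -/
noncomputable def simplexMatrix (k : ℕ) : Matrix (Fin (2 ^ k - 1)) (Fin k) (ZMod 2) :=
  Matrix.of fun i ↦ (Fintype.equivFinOfCardEq (card_ne_zero_vectors k)).symm i

noncomputable def simplexCode (k : ℕ) : Submodule (ZMod 2) (Fin (2 ^ k - 1) → ZMod 2) :=
  LinearMap.range (simplexMatrix k).mulVecLin

variable {k : ℕ}

lemma wt_simplexMatrix_mulVec {x : Fin k → ZMod 2} (hx : x ≠ 0) :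
    wt (simplexMatrix k *ᵥ x) = 2 ^ (k - 1) := by
  have hk : k ≠ 0 := by rintro rfl; exact hx (Subsingleton.elim _ _)
  have hrows : Fintype.card {i // (simplexMatrix k *ᵥ x) i ≠ 0} =
      Fintype.card {v : Fin k → ZMod 2 // v ⬝ᵥ x ≠ 0} :=
    Fintype.card_congr <|
      ((Fintype.equivFinOfCardEq (card_ne_zero_vectors k)).symm.subtypeEquiv fun _ ↦ Iff.rfl).trans
        (Equiv.subtypeSubtypeEquivSubtype (p := (· ≠ 0)) (q := (· ⬝ᵥ x ≠ 0))
          fun h h0 ↦ h (h0 ▸ zero_dotProduct x))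
  have hhalf := two_mul_card_dotProduct_ne_zero hx
  have hpow : 2 ^ k = 2 * 2 ^ (k - 1) := by rw [← pow_succ']; congr 1; omega
  rw [Fintype.card_fin, hpow] at hhalf
  rw [wt_eq_card, ← Fintype.card_subtype, hrows, Fintype.card_subtype]
  omega

lemma wt_of_mem_simplexCode {c : Fin (2 ^ k - 1) → ZMod 2} (hc : c ∈ simplexCode k) (hc0 : c ≠ 0) :
    wt c = 2 ^ (k - 1) := by
  obtain ⟨x, rfl⟩ := hc
  exact wt_simplexMatrix_mulVec (by rintro rfl; exact hc0 (map_zero _))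

lemma two_pow_pred_dvd_wt_of_mem_simplexCode {c : Fin (2 ^ k - 1) → ZMod 2}
    (hc : c ∈ simplexCode k) : 2 ^ (k - 1) ∣ wt c := by
  obtain rfl | hc0 := eq_or_ne c 0
  · simp [wt_zero]
  · rw [wt_of_mem_simplexCode hc hc0]

lemma isMinimalCode_simplexCode : IsMinimalCode (simplexCode k) :=
  isMinimalCode_of_forall_wt_eq fun _ ↦ wt_of_mem_simplexCode

lemma finrank_simplexCode : Module.finrank (ZMod 2) (simplexCode k) = k := by
  have hinj : Function.Injective (simplexMatrix k).mulVecLin := by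
    refine (injective_iff_map_eq_zero _).mpr fun x hx ↦ ?_
    by_contra hx0
    have := wt_simplexMatrix_mulVec hx0
    rw [← Matrix.mulVecLin_apply, hx, wt_zero] at this
    exact (pow_pos two_pos _).ne this
  rw [simplexCode, LinearMap.finrank_range_of_inj hinj, Module.finrank_fin_fun]

end Simplex

/-- For every integer `k ≥ 2` we have `m(k,2;2^(k-2)) = 2^k - 1`, attained by the binary
simplex code of dimension `k`. -/
theorem mDiv_binary_simplex (k : ℕ) (hk : 2 ≤ k) :
    mDiv (ZMod 2) k (2 ^ (k - 2)) = 2 ^ k - 1 ∧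
    ∃ C : Submodule (ZMod 2) (Fin (2 ^ k - 1) → ZMod 2),
      Module.finrank (ZMod 2) C = k ∧ IsMinimalCode C ∧
      ∀ c ∈ C, 2 ^ (k - 2) ∣ wt c := by
  have hsimplex : Module.finrank (ZMod 2) (simplexCode k) = k ∧ IsMinimalCode (simplexCode k) ∧
      ∀ c ∈ simplexCode k, 2 ^ (k - 2) ∣ wt c :=
    ⟨finrank_simplexCode, isMinimalCode_simplexCode, fun _ hc ↦
      (pow_dvd_pow 2 (by omega)).trans (two_pow_pred_dvd_wt_of_mem_simplexCode hc)⟩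
  refine ⟨le_antisymm (Nat.sInf_le ⟨_, hsimplex⟩) (le_csInf ⟨_, _, hsimplex⟩ ?_), _, hsimplex⟩
  rintro n ⟨C, hrank, hC, hdiv⟩
  simpa using hC.two_pow_sub_one_le_card hk hrank hdiv
end

section
/- For every integer t ≥ 2 we have m(2t,2;2^{t-1}) ≤ 3·(2^t - 1): the binary linear code of length 3·(2^t - 1) and dimension 2t whose associated point set is the union of three pairwise disjoint t-dimensional subspaces of PG(2t-1,2) is a minimal two-weight code whose nonzero weights are 2·2^{t-1} and 3·2^{t-1}; in particular it is 2^{t-1}-divisible. -/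
/-!
Every codeword is the restriction `f|_P` of a linear functional `f`. Inside a subspace `S`,
the vectors with `f v ≠ 0` form the complement of the hyperplane `S ⊓ ker f` unless `S ≤ ker f`,
so each of the three subspaces contributes `0` or `2^(t-1)` to the weight; and since any two of
them span the whole space, a nonzero `f` vanishes on at most one of them. The nonzero weights are
therefore `2·2^(t-1)` and `3·2^(t-1)`. Both occur, the second because the three annihilators
together have at most `3·2^t < 4^t` elements, and `w_max < 2 w_min` forces a binary code to be
minimal.
-/

open Module Function

section Weight

variable {ι κ F : Type*}

theorem wt_comp_equiv [Zero F] (c : ι → F) (e : κ ≃ ι) : wt (c ∘ e) = wt c :=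
  Set.ncard_preimage_of_injective_subset_range (s := {i | c i ≠ 0}) e.injective (by simp)

theorem wt_restrict {P : Set ι} [Zero F] (g : ι → F) :
    wt (fun p : P => g p) = {i | i ∈ P ∧ g i ≠ 0}.ncard := by
  rw [wt, ← Set.ncard_image_of_injective _ Subtype.val_injective]
  congr 1
  ext i
  simp [and_comm]

theorem IsMinimalCode.map_funCongrLeft [Semiring F] {C : Submodule F (ι → F)}
    (hC : IsMinimalCode C) (e : κ ≃ ι) :
    IsMinimalCode (C.map (LinearEquiv.funCongrLeft F F e).toLinearMap) := by
  rintro _ ⟨c, hc, rfl⟩ hc0 _ ⟨u, hu, rfl⟩ hu0 hsub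
  have hc0' : c ≠ 0 := by rintro rfl; exact hc0 (map_zero _)
  have hu0' : u ≠ 0 := by rintro rfl; exact hu0 (map_zero _)
  change e ⁻¹' {i | u i ≠ 0} ⊆ e ⁻¹' {i | c i ≠ 0} at hsub
  change e ⁻¹' {i | u i ≠ 0} = e ⁻¹' {i | c i ≠ 0}
  rw [hC c hc hc0' u hu hu0' (e.surjective.preimage_subset_preimage_iff.mp hsub)]

theorem mDiv_le_card [Field F] [Finite ι] {C : Submodule F (ι → F)} {Δ : ℕ}
    (hC : IsMinimalCode C) (hΔ : ∀ c ∈ C, Δ ∣ wt c) :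
    mDiv F (finrank F C) Δ ≤ Nat.card ι := by
  let e : Fin (Nat.card ι) ≃ ι := (Finite.equivFin ι).symm
  refine Nat.sInf_le ⟨_, LinearEquiv.finrank_map_eq _ _, hC.map_funCongrLeft e, ?_⟩
  rintro _ ⟨c, hc, rfl⟩
  exact (wt_comp_equiv c e).symm ▸ hΔ c hc

end Weight

section Binary

variable {ι : Type*} [Finite ι]

theorem wt_eq_wt_add_wt_sub {c u : ι → ZMod 2} (h : {i | u i ≠ 0} ⊆ {i | c i ≠ 0}) :
    wt c = wt u + wt (c - u) := by
  have hsupp : {i | (c - u) i ≠ 0} = {i | c i ≠ 0} \ {i | u i ≠ 0} := by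
    ext i
    have hi : u i ≠ 0 → c i ≠ 0 := @h i
    simp only [Set.mem_ofPred_eq, Set.mem_sdiff, Pi.sub_apply]
    revert hi
    generalize c i = a; generalize u i = b
    decide +revert
  rw [wt, wt, wt, hsupp, add_comm, Set.ncard_sdiff_add_ncard_of_subset h]

/-- The Ashikhmin–Barg condition `w_min / w_max > 1 / 2` over `F₂`. -/
theorem isMinimalCode_of_lt_two_mul (C : Submodule (ZMod 2) (ι → ZMod 2)) {a b : ℕ}
    (hab : b < 2 * a) (hw : ∀ c ∈ C, c ≠ 0 → a ≤ wt c ∧ wt c ≤ b) : IsMinimalCode C := by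
  intro c hc hc0 u hu hu0 hsub
  obtain rfl | hne := eq_or_ne u c
  · rfl
  have hsplit := wt_eq_wt_add_wt_sub hsub
  have hwc := hw c hc hc0
  have hwu := hw u hu hu0
  have hwd := hw (c - u) (C.sub_mem hc hu) (sub_ne_zero.mpr hne.symm)
  omega

end Binary

section FiniteField

variable {K V : Type*} [Field K] [AddCommGroup V] [Module K V] [FiniteDimensional K V]

theorem Submodule.ncard_coe_eq_pow_finrank (S : Submodule K V) :
    (S : Set V).ncard = Nat.card K ^ finrank K S := by
  rw [← Nat.card_coe_set_eq]
  exact (Module.natCard_eq_pow_finrank (K := K) : Nat.card S = _)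

theorem exists_dual_forall_not_le_ker {ι : Type*} [Fintype ι] (S : ι → Submodule K V)
    (h : ∑ i, Nat.card K ^ (finrank K V - finrank K (S i)) < Nat.card K ^ finrank K V) :
    ∃ f : Dual K V, ∀ i, ¬ S i ≤ LinearMap.ker f := by
  have hcover : (⋃ i, ((S i).dualAnnihilator : Set (Dual K V))) ≠ Set.univ := by
    intro huniv
    have hle := Set.ncard_iUnion_le_of_fintype fun i => ((S i).dualAnnihilator : Set (Dual K V))
    rw [huniv, ← Submodule.top_coe (R := K), Submodule.ncard_coe_eq_pow_finrank, finrank_top,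
      Subspace.dual_finrank_eq] at hle
    refine (hle.trans_lt (lt_of_eq_of_lt (Finset.sum_congr rfl fun i _ => ?_) h)).false
    rw [Submodule.ncard_coe_eq_pow_finrank, ← Subspace.finrank_add_finrank_dualAnnihilator_eq (S i),
      Nat.add_sub_cancel_left]
  obtain ⟨f, hf⟩ := (Set.ne_univ_iff_exists_notMem _).mp hcover
  refine ⟨f, fun i hi => hf (Set.mem_iUnion.mpr ⟨i, ?_⟩)⟩
  exact (Submodule.mem_dualAnnihilator f).mpr fun v hv => hi hv

variable [Finite K]

theorem ncard_setOf_mem_and_apply_ne_zero {S : Submodule K V} {f : Dual K V}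
    (hS : ¬ S ≤ LinearMap.ker f) :
    {v | v ∈ S ∧ f v ≠ 0}.ncard = (Nat.card K - 1) * Nat.card K ^ (finrank K S - 1) := by
  have := Module.finite_of_finite K (M := V)
  have hf : f ≠ 0 := by rintro rfl; simp at hS
  have hsup : S ⊔ LinearMap.ker f = ⊤ :=
    (LinearMap.isCoatom_ker_of_surjective (LinearMap.surjective hf)).2 _
      (lt_of_le_of_ne le_sup_right fun h => hS (h ▸ le_sup_left))
  have hrank := Submodule.finrank_sup_add_finrank_inf_eq S (LinearMap.ker f)
  rw [hsup, finrank_top, ← f.finrank_ker_add_one_of_ne_zero hf] at hrank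
  have hset : {v | v ∈ S ∧ f v ≠ 0} = (S : Set V) \ (S ⊓ LinearMap.ker f : Submodule K V) := by
    ext v; simp
  rw [hset, Set.ncard_sdiff (fun v hv => hv.1), Submodule.ncard_coe_eq_pow_finrank,
    Submodule.ncard_coe_eq_pow_finrank, show finrank K S = finrank K ↥(S ⊓ LinearMap.ker f) + 1
      by omega, Nat.add_sub_cancel, pow_succ, ← Nat.mul_sub_one, mul_comm]

end FiniteField

section EvalCode

variable (K : Type*) {V : Type*} [Field K] [AddCommGroup V] [Module K V]

/-- The code associated to the point set `P`, whose generator matrix has the points of `P` as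
columns. -/
def evalCode (P : Set V) : Submodule K (P → K) :=
  LinearMap.range (LinearMap.pi fun p : P => Dual.eval K V p)

variable {K}

theorem mem_evalCode {P : Set V} {c : P → K} :
    c ∈ evalCode K P ↔ ∃ f : Dual K V, (fun p : P => f p) = c :=
  Iff.rfl

theorem finrank_evalCode [FiniteDimensional K V] {P : Set V} (hP : Submodule.span K P = ⊤) :
    finrank K (evalCode K P) = finrank K V := by
  rw [evalCode, LinearMap.finrank_range_of_inj, Subspace.dual_finrank_eq]
  intro f g hfg
  exact LinearMap.ext_on hP fun p hp => congr_fun hfg ⟨p, hp⟩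

theorem range_pi_sum_smul_proj {n : Type*} [Fintype n] (P : Set (n → K)) :
    LinearMap.range (LinearMap.pi fun p : P =>
      ∑ i, (p : n → K) i • (LinearMap.proj i : (n → K) →ₗ[K] K)) = evalCode K P := by
  classical
  have hcomp : (LinearMap.pi fun p : P => ∑ i, (p : n → K) i • (LinearMap.proj i : (n → K) →ₗ[K] K))
      = (LinearMap.pi fun p : P => Dual.eval K (n → K) p) ∘ₗ (dotProductEquiv K n).toLinearMap := by
    ext x p
    simp [dotProduct, mul_comm]
  rw [hcomp, LinearMap.range_comp_of_range_eq_top _ (LinearEquiv.range _), evalCode]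

end EvalCode

section PartialSpread

variable {K V ι : Type*} [Field K] [AddCommGroup V] [Module K V]

def spreadPoints (S : ι → Submodule K V) : Set V := (⋃ i, (S i : Set V)) \ {0}

variable {S : ι → Submodule K V} {d : ℕ}

theorem pairwise_disjoint_sdiff_zero (hdisj : Pairwise (Disjoint on S)) :
    Pairwise (Disjoint on fun i => ((S i : Set V) \ {0} : Set V)) := by
  intro i j hij
  refine Set.disjoint_left.mpr fun v ⟨hvi, hv0⟩ ⟨hvj, _⟩ => hv0 ?_
  exact Submodule.disjoint_def.mp (hdisj hij) v hvi hvj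

variable [FiniteDimensional K V]

theorem sup_eq_top_of_pairwise_disjoint
    (hS : ∀ i, finrank K (S i) = d) (hV : finrank K V = 2 * d)
    (hdisj : Pairwise (Disjoint on S)) {i j : ι} (hij : i ≠ j) : S i ⊔ S j = ⊤ :=
  Submodule.eq_top_of_disjoint _ _ (by rw [hS, hS, hV]; omega) (hdisj hij)

theorem subsingleton_setOf_le_ker
    (hS : ∀ i, finrank K (S i) = d) (hV : finrank K V = 2 * d)
    (hdisj : Pairwise (Disjoint on S)) {f : Dual K V} (hf : f ≠ 0) :
    {i | S i ≤ LinearMap.ker f}.Subsingleton := by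
  intro i hi j hj
  by_contra hij
  apply hf
  rw [← LinearMap.ker_eq_top, eq_top_iff, ← sup_eq_top_of_pairwise_disjoint hS hV hdisj hij]
  exact sup_le hi hj

theorem span_spreadPoints
    (hS : ∀ i, finrank K (S i) = d) (hV : finrank K V = 2 * d)
    (hdisj : Pairwise (Disjoint on S)) {i j : ι} (hij : i ≠ j) :
    Submodule.span K (spreadPoints S) = ⊤ := by
  have hle : ∀ k, S k ≤ Submodule.span K (spreadPoints S) := fun k =>
    calc S k = Submodule.span K ((S k : Set V) \ {0}) := by
          rw [Submodule.span_sdiff_singleton_zero, Submodule.span_eq]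
      _ ≤ _ := Submodule.span_mono <|
          Set.sdiff_subset_sdiff_left (Set.subset_iUnion (fun i => (S i : Set V)) k)
  rw [eq_top_iff, ← sup_eq_top_of_pairwise_disjoint hS hV hdisj hij]
  exact sup_le (hle i) (hle j)

variable [Finite ι]

theorem ncard_setOf_not_le_ker (hS : ∀ i, finrank K (S i) = d) (hV : finrank K V = 2 * d)
    (hdisj : Pairwise (Disjoint on S)) {f : Dual K V} (hf : f ≠ 0) :
    {i | ¬ S i ≤ LinearMap.ker f}.ncard = Nat.card ι - 1 ∨
      {i | ¬ S i ≤ LinearMap.ker f}.ncard = Nat.card ι := by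
  have hle := (Set.ncard_le_one_iff_subsingleton (s := {i | S i ≤ LinearMap.ker f})).mpr
    (subsingleton_setOf_le_ker hS hV hdisj hf)
  rw [← Set.compl_ofPred, Set.ncard_compl]
  omega

variable [Finite K]

theorem ncard_spreadPoints (hS : ∀ i, finrank K (S i) = d)
    (hdisj : Pairwise (Disjoint on S)) :
    (spreadPoints S).ncard = Nat.card ι * (Nat.card K ^ d - 1) := by
  have := Module.finite_of_finite K (M := V)
  rw [spreadPoints, Set.iUnion_sdiff,
    Set.ncard_iUnion_of_finite (fun _ => Set.toFinite _) (pairwise_disjoint_sdiff_zero hdisj)]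
  have := Fintype.ofFinite ι
  simp [Set.ncard_sdiff_singleton_of_mem, Submodule.ncard_coe_eq_pow_finrank, hS,
    finsum_eq_sum_of_fintype, Nat.card_eq_fintype_card]

theorem wt_spreadPoints (hS : ∀ i, finrank K (S i) = d)
    (hdisj : Pairwise (Disjoint on S)) (f : Dual K V) :
    wt (fun p : spreadPoints S => f p) =
      (Nat.card K - 1) * Nat.card K ^ (d - 1) * {i | ¬ S i ≤ LinearMap.ker f}.ncard := by
  have := Module.finite_of_finite K (M := V)
  have hset : {v | v ∈ spreadPoints S ∧ f v ≠ 0} =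
      ⋃ i ∈ {i | ¬ S i ≤ LinearMap.ker f}, {v | v ∈ S i ∧ f v ≠ 0} := by
    ext v
    simp only [spreadPoints, Set.mem_sdiff, Set.mem_iUnion, Set.mem_ofPred_eq]
    constructor
    · rintro ⟨⟨⟨i, hvi⟩, -⟩, hfv⟩
      exact ⟨i, fun hle => hfv (hle hvi), hvi, hfv⟩
    · rintro ⟨i, -, hvi, hfv⟩
      exact ⟨⟨⟨i, hvi⟩, by rintro rfl; simp at hfv⟩, hfv⟩
  have hcount : ∀ i ∈ {i | ¬ S i ≤ LinearMap.ker f},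
      {v | v ∈ S i ∧ f v ≠ 0}.ncard = (Nat.card K - 1) * Nat.card K ^ (d - 1) := fun i hi => by
    rw [ncard_setOf_mem_and_apply_ne_zero hi, hS]
  rw [wt_restrict, hset, Set.Finite.ncard_biUnion (Set.toFinite _) (fun _ _ => Set.toFinite _),
    finsum_mem_congr rfl hcount, ← finsum_one, mul_finsum_mem, mul_one]
  have hsub : ∀ i, {v | v ∈ S i ∧ f v ≠ 0} ⊆ (S i : Set V) \ {0} := by
    rintro i v ⟨hv, hfv⟩
    exact ⟨hv, by rintro rfl; simp at hfv⟩
  exact fun i _ j _ hij => (pairwise_disjoint_sdiff_zero hdisj hij).mono (hsub i) (hsub j)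

theorem wt_mem_evalCode_spreadPoints (hS : ∀ i, finrank K (S i) = d)
    (hV : finrank K V = 2 * d) (hdisj : Pairwise (Disjoint on S))
    {c : spreadPoints S → K} (hc : c ∈ evalCode K (spreadPoints S)) (hc0 : c ≠ 0) :
    wt c = (Nat.card K - 1) * Nat.card K ^ (d - 1) * (Nat.card ι - 1) ∨
      wt c = (Nat.card K - 1) * Nat.card K ^ (d - 1) * Nat.card ι := by
  obtain ⟨f, rfl⟩ := mem_evalCode.mp hc
  have hf : f ≠ 0 := by rintro rfl; exact hc0 rfl
  rw [wt_spreadPoints hS hdisj]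
  rcases ncard_setOf_not_le_ker hS hV hdisj hf with h | h <;> simp [h]

theorem dvd_wt_of_mem_evalCode_spreadPoints (hS : ∀ i, finrank K (S i) = d)
    (hdisj : Pairwise (Disjoint on S)) {c : spreadPoints S → K}
    (hc : c ∈ evalCode K (spreadPoints S)) :
    (Nat.card K - 1) * Nat.card K ^ (d - 1) ∣ wt c := by
  obtain ⟨f, rfl⟩ := mem_evalCode.mp hc
  rw [wt_spreadPoints hS hdisj]
  exact Dvd.intro _ rfl

theorem exists_wt_eq_mul_card_sub_one (hS : ∀ i, finrank K (S i) = d)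
    (hV : finrank K V = 2 * d) (hdisj : Pairwise (Disjoint on S)) (hd : 0 < d) (i₀ : ι) :
    ∃ c ∈ evalCode K (spreadPoints S),
      wt c = (Nat.card K - 1) * Nat.card K ^ (d - 1) * (Nat.card ι - 1) := by
  have hlt : S i₀ < ⊤ := by
    refine lt_top_iff_ne_top.mpr fun htop => ?_
    have := finrank_top K V
    rw [← htop, hS, hV] at this
    omega
  obtain ⟨f, hf, hmap⟩ := Submodule.exists_dual_map_eq_bot_of_lt_top hlt inferInstance
  have hker : {i | S i ≤ LinearMap.ker f} = {i₀} :=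
    (subsingleton_setOf_le_ker hS hV hdisj hf).eq_singleton_of_mem
      (LinearMap.le_ker_iff_map.mpr hmap)
  refine ⟨_, mem_evalCode.mpr ⟨f, rfl⟩, ?_⟩
  rw [wt_spreadPoints hS hdisj, ← Set.compl_ofPred, hker, Set.ncard_compl, Set.ncard_singleton]

theorem exists_wt_eq_mul_card (hS : ∀ i, finrank K (S i) = d) (hV : finrank K V = 2 * d)
    (hdisj : Pairwise (Disjoint on S))
    (hcard : Nat.card ι * Nat.card K ^ d < Nat.card K ^ (2 * d)) :
    ∃ c ∈ evalCode K (spreadPoints S),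
      wt c = (Nat.card K - 1) * Nat.card K ^ (d - 1) * Nat.card ι := by
  have := Fintype.ofFinite ι
  obtain ⟨f, hf⟩ := exists_dual_forall_not_le_ker S (by
    simpa [hS, hV, two_mul, Nat.card_eq_fintype_card] using hcard)
  refine ⟨_, mem_evalCode.mpr ⟨f, rfl⟩, ?_⟩
  have huniv : {i | ¬ S i ≤ LinearMap.ker f} = Set.univ := Set.eq_univ_of_forall hf
  rw [wt_spreadPoints hS hdisj, huniv, Set.ncard_univ]

end PartialSpread

theorem isMinimalCode_evalCode_spreadPoints {V ι : Type*} [AddCommGroup V] [Module (ZMod 2) V]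
    [FiniteDimensional (ZMod 2) V] [Finite ι] {S : ι → Submodule (ZMod 2) V}
    {d : ℕ} (hS : ∀ i, finrank (ZMod 2) (S i) = d) (hV : finrank (ZMod 2) V = 2 * d)
    (hdisj : Pairwise (Disjoint on S)) (hι : 3 ≤ Nat.card ι) :
    IsMinimalCode (evalCode (ZMod 2) (spreadPoints S)) := by
  have := Module.finite_of_finite (ZMod 2) (M := V)
  have hpos : 0 < 2 ^ (d - 1) := Nat.two_pow_pos _
  refine isMinimalCode_of_lt_two_mul _ (a := 2 ^ (d - 1) * (Nat.card ι - 1))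
    (b := 2 ^ (d - 1) * Nat.card ι) ?_ fun c hc hc0 => ?_
  · rw [← mul_assoc, mul_comm 2, mul_assoc]
    exact Nat.mul_lt_mul_of_pos_left (by omega) hpos
  · rcases wt_mem_evalCode_spreadPoints hS hV hdisj hc hc0 with h | h <;>
      simp only [h, Nat.card_zmod] <;> constructor <;> gcongr <;> omega

/-- For every integer `t ≥ 2` we have `m(2t,2;2^(t-1)) ≤ 3·(2^t - 1)`: given three
pairwise disjoint `t`-dimensional subspaces of `PG(2t-1,2)`, the binary code of length
`3·(2^t-1)` associated to the union of their point sets (the codeword of `x ∈ F_2^(2t)`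
records the standard bilinear pairing of `x` with each point) is a minimal two-weight
code with nonzero weights `2·2^(t-1)` and `3·2^(t-1)`; in particular it is
`2^(t-1)`-divisible. -/
theorem three_disjoint_subspaces_minimal_two_weight
    (t : ℕ) (ht : 2 ≤ t)
    (S₁ S₂ S₃ : Submodule (ZMod 2) (Fin (2 * t) → ZMod 2))
    (hS₁ : Module.finrank (ZMod 2) S₁ = t)
    (hS₂ : Module.finrank (ZMod 2) S₂ = t)
    (hS₃ : Module.finrank (ZMod 2) S₃ = t)
    (h12 : S₁ ⊓ S₂ = ⊥) (h13 : S₁ ⊓ S₃ = ⊥) (h23 : S₂ ⊓ S₃ = ⊥)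
    (P : Set (Fin (2 * t) → ZMod 2))
    (hP : P = ((S₁ : Set (Fin (2 * t) → ZMod 2)) ∪ (S₂ : Set (Fin (2 * t) → ZMod 2)) ∪
      (S₃ : Set (Fin (2 * t) → ZMod 2))) \ {0})
    (C : Submodule (ZMod 2) (P → ZMod 2))
    (hC : C = LinearMap.range (LinearMap.pi (fun p : P =>
      ∑ i : Fin (2 * t), (p : Fin (2 * t) → ZMod 2) i •
        (LinearMap.proj i : (Fin (2 * t) → ZMod 2) →ₗ[ZMod 2] ZMod 2)))) :
    Nat.card P = 3 * (2 ^ t - 1) ∧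
    Module.finrank (ZMod 2) C = 2 * t ∧
    IsMinimalCode C ∧
    (∀ c ∈ C, c ≠ 0 → wt c = 2 * 2 ^ (t - 1) ∨ wt c = 3 * 2 ^ (t - 1)) ∧
    (∃ c ∈ C, wt c = 2 * 2 ^ (t - 1)) ∧ (∃ c ∈ C, wt c = 3 * 2 ^ (t - 1)) ∧
    (∀ c ∈ C, 2 ^ (t - 1) ∣ wt c) ∧
    mDiv (ZMod 2) (2 * t) (2 ^ (t - 1)) ≤ 3 * (2 ^ t - 1) := by
  set S : Fin 3 → Submodule (ZMod 2) (Fin (2 * t) → ZMod 2) := ![S₁, S₂, S₃]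
  have hS : ∀ i, finrank (ZMod 2) (S i) = t := by
    intro i; fin_cases i <;> assumption
  have hV : finrank (ZMod 2) (Fin (2 * t) → ZMod 2) = 2 * t := Module.finrank_fin_fun _
  have hdisj : Pairwise (Disjoint on S) := by
    intro i j hij
    fin_cases i <;> fin_cases j <;> simp_all [S, disjoint_iff, inf_comm]
  obtain rfl : P = spreadPoints S := by
    rw [hP, spreadPoints]
    congr 1
    ext v
    simp [S, Fin.exists_fin_succ, or_assoc]
  rw [range_pi_sum_smul_proj] at hC
  subst hC
  have hmin := isMinimalCode_evalCode_spreadPoints hS hV hdisj (by simp)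
  have hdvd : ∀ c ∈ evalCode (ZMod 2) (spreadPoints S), 2 ^ (t - 1) ∣ wt c := fun c hc => by
    simpa using dvd_wt_of_mem_evalCode_spreadPoints hS hdisj hc
  have hcard : Nat.card (spreadPoints S) = 3 * (2 ^ t - 1) := by
    simp [ncard_spreadPoints hS hdisj]
  have hrank := finrank_evalCode (span_spreadPoints hS hV hdisj (i := 0) (j := 1) (by decide))
  have hbig : Nat.card (Fin 3) * Nat.card (ZMod 2) ^ t < Nat.card (ZMod 2) ^ (2 * t) := by
    have : 2 ^ 2 ≤ 2 ^ t := Nat.pow_le_pow_right (by norm_num) ht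
    simp only [Nat.card_fin, Nat.card_zmod, two_mul, pow_add]
    nlinarith
  obtain ⟨c₂, hc₂, hwt₂⟩ := exists_wt_eq_mul_card_sub_one hS hV hdisj (by omega) 0
  obtain ⟨c₃, hc₃, hwt₃⟩ := exists_wt_eq_mul_card hS hV hdisj hbig
  refine ⟨hcard, hrank.trans hV, hmin, fun c hc hc0 => ?_, ⟨c₂, hc₂, ?_⟩, ⟨c₃, hc₃, ?_⟩, hdvd, ?_⟩
  · rcases wt_mem_evalCode_spreadPoints hS hV hdisj hc hc0 with h | h <;> simp [h, mul_comm]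
  · simp [hwt₂, mul_comm]
  · simp [hwt₃, mul_comm]
  · simpa [hrank, hV, hcard] using mDiv_le_card hmin hdvd
end

section
/- Let M be a strong blocking multiset of points in PG(k-1,q) with k ≥ 2, let Q be a point of PG(k-1,q), and let M_Q be the multiset of points in the quotient geometry PG(k-1,q)/Q ≅ PG(k-2,q) obtained by projection through Q, i.e., M_Q(L/Q) = M(L) - M(Q) for every line L of PG(k-1,q) through Q. Then the cardinality of M_Q equals #M - M(Q), the points of positive multiplicity of M_Q span the whole quotient space (of projective dimension k-2), and M_Q is a strong blocking multiset. -/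
/-!
A point `P ≠ Q` projects to the point `(P ⊔ Q)/Q`, and `M_Q` is exactly the push-forward of `M`,
with the point `Q` removed, along this map; summing over the fibres gives `#M_Q = #M - M(Q)`.
The hyperplanes of `V ⧸ Q` are the images `H/Q` of the hyperplanes `H ⊇ Q`, and projection
carries the points of `M` in `H` onto points of `M_Q` in `H/Q` (or onto `0`, for `Q` itself), so
`M_Q` inherits the strong blocking property. Likewise `M_Q` spans because `M` does: for `k ≥ 2`
every vector lies in a hyperplane, which is spanned by points of `M`.
-/

open Module

/-- For a multiplicity function `M` on submodules (supported on points, i.e. on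
one-dimensional subspaces), `msum M S` is the total multiplicity of the points contained
in the subspace `S`; `msum M ⊤` is the cardinality `#M` of the multiset `M`. -/
noncomputable def msum {F V : Type*} [Field F] [AddCommGroup V] [Module F V]
    (M : Submodule F V → ℕ) (S : Submodule F V) : ℕ :=
  ∑ᶠ (P : Submodule F V) (_ : P ≤ S), M P

open Submodule

section ProjectiveGeometry

variable {F V : Type*} [Field F] [AddCommGroup V] [Module F V]

def supportSpan (M : Submodule F V → ℕ) (S : Submodule F V) : Submodule F V :=
  ⨆ (P : Submodule F V) (_ : 0 < M P ∧ P ≤ S), P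

def IsStrongBlocking (M : Submodule F V → ℕ) : Prop :=
  ∀ H : Submodule F V, finrank F H + 1 = finrank F V → supportSpan M H = H

noncomputable def projectThrough (M : Submodule F V → ℕ) (Q : Submodule F V) :
    Submodule F (V ⧸ Q) → ℕ :=
  fun P' => if finrank F P' = 1 then msum M (P'.comap Q.mkQ) - M Q else 0

lemma supportSpan_le (M : Submodule F V → ℕ) (S : Submodule F V) : supportSpan M S ≤ S :=
  iSup₂_le fun _ h => h.2

lemma msum_eq_sum [Fintype (Submodule F V)] (M : Submodule F V → ℕ) (S : Submodule F V)
    [DecidablePred (· ≤ S)] : msum M S = ∑ P, if P ≤ S then M P else 0 := by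
  rw [msum, finsum_eq_sum_of_fintype]
  exact Finset.sum_congr rfl fun P _ => finsum_eq_if

lemma finrank_map_of_disjoint_ker {W : Type*} [AddCommGroup W] [Module F W] (f : V →ₗ[F] W)
    {P : Submodule F V} (h : Disjoint P (LinearMap.ker f)) :
    finrank F (P.map f) = finrank F P := by
  rw [← LinearMap.range_domRestrict]
  exact (LinearEquiv.ofInjective _ (LinearMap.injective_domRestrict_iff.mpr h)).finrank_eq.symm

lemma finrank_map_mkQ_of_ne {P Q : Submodule F V} (hP : finrank F P = 1)
    (hQ : finrank F Q = 1) (hne : P ≠ Q) : finrank F (P.map Q.mkQ) = 1 := by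
  refine (finrank_map_of_disjoint_ker _ ?_).trans hP
  rw [ker_mkQ]
  exact (isAtom_iff_finrank_eq_one.mpr hP).disjoint_of_ne (isAtom_iff_finrank_eq_one.mpr hQ) hne

variable [FiniteDimensional F V]

lemma finrank_comap_mkQ (Q : Submodule F V) (S' : Submodule F (V ⧸ Q)) :
    finrank F (S'.comap Q.mkQ) = finrank F S' + finrank F Q := by
  have h := LinearMap.finrank_range_add_finrank_ker (Q.mkQ.domRestrict (S'.comap Q.mkQ))
  rwa [LinearMap.range_domRestrict, map_comap_eq_of_surjective Q.mkQ_surjective,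
    LinearMap.ker_domRestrict, ker_mkQ,
    (comapSubtypeEquivOfLe (le_comap_mkQ Q S')).finrank_eq, eq_comm] at h

lemma map_mkQ_eq_iff {P Q : Submodule F V} (hP : finrank F P = 1) (hQ : finrank F Q = 1)
    (hne : P ≠ Q) (P' : Submodule F (V ⧸ Q)) :
    P.map Q.mkQ = P' ↔ finrank F P' = 1 ∧ P ≤ P'.comap Q.mkQ := by
  have hmap := finrank_map_mkQ_of_ne hP hQ hne
  refine ⟨?_, fun ⟨h1, hle⟩ => eq_of_le_of_finrank_eq (map_le_iff_le_comap.mpr hle) ?_⟩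
  · rintro rfl
    exact ⟨hmap, le_comap_map _ _⟩
  · rw [hmap, h1]

lemma exists_hyperplane_ge {S : Submodule F V} (h : S ≠ ⊤) :
    ∃ H : Submodule F V, S ≤ H ∧ finrank F H + 1 = finrank F V := by
  obtain ⟨f, hf, hle⟩ := S.exists_le_ker_of_lt_top h.lt_top
  exact ⟨LinearMap.ker f, hle, Module.Dual.finrank_ker_add_one_of_ne_zero hf⟩

lemma eq_top_of_forall_hyperplane_le (h2 : 2 ≤ finrank F V) {W : Submodule F V}
    (h : ∀ H : Submodule F V, finrank F H + 1 = finrank F V → H ≤ W) : W = ⊤ := by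
  refine eq_top_iff'.mpr fun v => ?_
  have hv : span F {v} ≠ ⊤ :=
    (span_lt_top_of_card_lt_finrank (s := {v}) (by simp; omega)).ne
  obtain ⟨H, hvH, hH⟩ := exists_hyperplane_ge hv
  exact h H hH (hvH (mem_span_singleton_self v))

lemma IsStrongBlocking.supportSpan_top {M : Submodule F V → ℕ} (hM : IsStrongBlocking M)
    (h2 : 2 ≤ finrank F V) : supportSpan M ⊤ = ⊤ :=
  eq_top_of_forall_hyperplane_le h2 fun H hH =>
    (hM H hH).ge.trans (iSup₂_mono' fun P hP => ⟨P, ⟨hP.1, le_top⟩, le_rfl⟩)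

section Projection

variable {M : Submodule F V → ℕ} {Q : Submodule F V}

open Classical in
lemma projectThrough_eq_sum_fiber [Fintype (Submodule F V)]
    (hM : ∀ P : Submodule F V, M P ≠ 0 → finrank F P = 1) (hQ : finrank F Q = 1)
    (P' : Submodule F (V ⧸ Q)) :
    projectThrough M Q P' = ∑ P ∈ Finset.univ.erase Q, if P.map Q.mkQ = P' then M P else 0 := by
  have hterm : ∀ P ∈ Finset.univ.erase Q, (if P.map Q.mkQ = P' then M P else 0) =
      if finrank F P' = 1 ∧ P ≤ P'.comap Q.mkQ then M P else 0 := by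
    intro P hP
    rcases eq_or_ne (M P) 0 with h0 | h0
    · simp only [h0, ite_self]
    · simp only [map_mkQ_eq_iff (hM P h0) hQ (Finset.ne_of_mem_erase hP)]
  rw [Finset.sum_congr rfl hterm, projectThrough]
  split_ifs with h1
  · simp only [h1, true_and]
    rw [msum_eq_sum, ← Finset.add_sum_erase _ _ (Finset.mem_univ Q), if_pos (le_comap_mkQ Q P'),
      Nat.add_sub_cancel_left]
  · simp only [h1, false_and, if_false, Finset.sum_const_zero]

lemma msum_projectThrough [Fintype (Submodule F V)] [Fintype (Submodule F (V ⧸ Q))]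
    (hM : ∀ P : Submodule F V, M P ≠ 0 → finrank F P = 1) (hQ : finrank F Q = 1) :
    msum (projectThrough M Q) ⊤ = msum M ⊤ - M Q := by
  classical
  simp only [msum_eq_sum, le_top, if_true]
  rw [Finset.sum_congr rfl fun P' _ => projectThrough_eq_sum_fiber hM hQ P', Finset.sum_comm,
    ← Finset.add_sum_erase _ _ (Finset.mem_univ Q), Nat.add_sub_cancel_left]
  exact Finset.sum_congr rfl fun P _ => by rw [Finset.sum_ite_eq, if_pos (Finset.mem_univ _)]

lemma projectThrough_map_mkQ_pos [Finite (Submodule F V)]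
    (hM : ∀ P : Submodule F V, M P ≠ 0 → finrank F P = 1) (hQ : finrank F Q = 1)
    {P : Submodule F V} (hP : 0 < M P) (hne : P ≠ Q) : 0 < projectThrough M Q (P.map Q.mkQ) := by
  classical
  have := Fintype.ofFinite (Submodule F V)
  rw [projectThrough_eq_sum_fiber hM hQ]
  exact hP.trans_le <| (if_pos rfl).symm.trans_le <|
    Finset.single_le_sum (f := fun R => if R.map Q.mkQ = P.map Q.mkQ then M R else 0)
      (fun _ _ => Nat.zero_le _) (Finset.mem_erase.mpr ⟨hne, Finset.mem_univ P⟩)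

lemma map_supportSpan_le_supportSpan_projectThrough [Finite (Submodule F V)]
    (hM : ∀ P : Submodule F V, M P ≠ 0 → finrank F P = 1) (hQ : finrank F Q = 1)
    (S : Submodule F V) :
    (supportSpan M S).map Q.mkQ ≤ supportSpan (projectThrough M Q) (S.map Q.mkQ) := by
  simp only [supportSpan, Submodule.map_iSup]
  refine iSup₂_le fun P ⟨hP, hPS⟩ => ?_
  rcases eq_or_ne P Q with rfl | hne
  · simp
  · exact le_iSup₂_of_le (P.map Q.mkQ)
      ⟨projectThrough_map_mkQ_pos hM hQ hP hne, map_mono hPS⟩ le_rfl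

lemma supportSpan_projectThrough_top [Finite (Submodule F V)]
    (hM : ∀ P : Submodule F V, M P ≠ 0 → finrank F P = 1) (hQ : finrank F Q = 1)
    (hspan : supportSpan M ⊤ = ⊤) : supportSpan (projectThrough M Q) ⊤ = ⊤ := by
  refine eq_top_iff.mpr ?_
  calc ⊤ = (supportSpan M ⊤).map Q.mkQ := by rw [hspan, Submodule.map_top, range_mkQ]
    _ ≤ supportSpan (projectThrough M Q) ((⊤ : Submodule F V).map Q.mkQ) :=
      map_supportSpan_le_supportSpan_projectThrough hM hQ ⊤
    _ = supportSpan (projectThrough M Q) ⊤ := by rw [Submodule.map_top, range_mkQ]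

lemma isStrongBlocking_projectThrough [Finite (Submodule F V)] (hblock : IsStrongBlocking M)
    (hM : ∀ P : Submodule F V, M P ≠ 0 → finrank F P = 1) (hQ : finrank F Q = 1) :
    IsStrongBlocking (projectThrough M Q) := by
  intro H' hH'
  have hcomap : finrank F (H'.comap Q.mkQ) + 1 = finrank F V := by
    rw [finrank_comap_mkQ, ← Q.finrank_quotient_add_finrank, ← hH']
    omega
  refine le_antisymm (supportSpan_le _ _) ?_
  calc H' = (H'.comap Q.mkQ).map Q.mkQ := (map_comap_eq_of_surjective Q.mkQ_surjective H').symm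
    _ = (supportSpan M (H'.comap Q.mkQ)).map Q.mkQ := by rw [hblock _ hcomap]
    _ ≤ supportSpan (projectThrough M Q) ((H'.comap Q.mkQ).map Q.mkQ) :=
      map_supportSpan_le_supportSpan_projectThrough hM hQ _
    _ = supportSpan (projectThrough M Q) H' := by rw [map_comap_eq_of_surjective Q.mkQ_surjective]

end Projection

end ProjectiveGeometry

/-- Let `M` be a strong blocking multiset of points in `PG(k-1,q)` (realized as a
multiplicity function on the one-dimensional subspaces of a `k`-dimensional `F_q`-vector
space `V`, strong blocking meaning that for every hyperplane `H` the points of positive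
multiplicity contained in `H` span `H`), let `Q` be a point, and let `M_Q` be the multiset
of points of the quotient geometry `PG(k-1,q)/Q ≅ PG(k-2,q)` obtained by projection
through `Q`, i.e. `M_Q(L/Q) = M(L) - M(Q)` for every line `L` through `Q`. Then
`#M_Q = #M - M(Q)`, the points of positive multiplicity of `M_Q` span the whole quotient
space (which has projective dimension `k-2`), and `M_Q` is a strong blocking multiset. -/
theorem projection_of_strong_blocking_multiset
    {F V : Type*} [Field F] [Fintype F] [AddCommGroup V] [Module F V]
    [FiniteDimensional F V]
    (k : ℕ) (hk : 2 ≤ k) (hdim : finrank F V = k)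
    (M : Submodule F V → ℕ)
    (hM : ∀ P : Submodule F V, M P ≠ 0 → finrank F P = 1)
    (hblock : ∀ H : Submodule F V, finrank F H = k - 1 →
      (⨆ (P : Submodule F V) (_ : 0 < M P ∧ P ≤ H), P) = H)
    (Q : Submodule F V) (hQ : finrank F Q = 1)
    (MQ : Submodule F (V ⧸ Q) → ℕ)
    (hMQ : ∀ P' : Submodule F (V ⧸ Q), MQ P' =
      if finrank F P' = 1 then msum M (Submodule.comap Q.mkQ P') - M Q else 0) :
    msum MQ ⊤ = msum M ⊤ - M Q ∧
    finrank F (V ⧸ Q) = k - 1 ∧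
    (⨆ (P' : Submodule F (V ⧸ Q)) (_ : 0 < MQ P'), P') = ⊤ ∧
    ∀ H' : Submodule F (V ⧸ Q), finrank F H' = k - 2 →
      (⨆ (P' : Submodule F (V ⧸ Q)) (_ : 0 < MQ P' ∧ P' ≤ H'), P') = H' := by
  obtain rfl : MQ = projectThrough M Q := funext hMQ
  have : Finite V := Module.finite_of_finite F
  have := Fintype.ofFinite (Submodule F V)
  have : Finite (V ⧸ Q) := Module.finite_of_finite F
  have := Fintype.ofFinite (Submodule F (V ⧸ Q))
  have hquot : finrank F (V ⧸ Q) + 1 = k := by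
    rw [← hdim, ← hQ, Q.finrank_quotient_add_finrank]
  have hstrong : IsStrongBlocking M := fun H hH => hblock H (by omega)
  have hspan : supportSpan (projectThrough M Q) ⊤ = ⊤ :=
    supportSpan_projectThrough_top hM hQ (hstrong.supportSpan_top (by omega))
  refine ⟨msum_projectThrough hM hQ, by omega, ?_,
    fun H' hH' => isStrongBlocking_projectThrough hstrong hM hQ H' (by omega)⟩
  simpa only [supportSpan, le_top, and_true] using hspan
end

section
/- Let C be a linear [n,k]_2 code, and embed its codewords into ℝ^n by reading coordinates of F_2 as the real numbers 0 and 1. Then the set of codewords of C is an acute set in ℝ^n (i.e., for all pairwise distinct codewords a, b, c, the angle at b in the triple (a,b,c) is strictly less than π/2, equivalently the real inner product ⟨a-b, c-b⟩ is strictly positive) if and only if C is a minimal code. -/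
/-- The embedding of a binary word into `ℝ^n`, reading the coordinates of `F_2` as the
real numbers `0` and `1`. -/
noncomputable def toReal {n : ℕ} (c : Fin n → ZMod 2) : Fin n → ℝ :=
  fun i => ((c i).val : ℝ)

namespace ZMod

lemma eq_zero_or_eq_one (x : ZMod 2) : x = 0 ∨ x = 1 := by
  revert x; decide

lemma val_sub_mul_val_sub_nonneg (x y z : ZMod 2) :
    0 ≤ ((x.val : ℝ) - y.val) * ((z.val : ℝ) - y.val) := by
  rcases x.eq_zero_or_eq_one with rfl | rfl <;> rcases y.eq_zero_or_eq_one with rfl | rfl <;>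
    rcases z.eq_zero_or_eq_one with rfl | rfl <;> simp [ZMod.val_one]

lemma val_sub_mul_val_sub_pos_iff (x y z : ZMod 2) :
    0 < ((x.val : ℝ) - y.val) * ((z.val : ℝ) - y.val) ↔ x ≠ y ∧ z ≠ y := by
  rcases x.eq_zero_or_eq_one with rfl | rfl <;> rcases y.eq_zero_or_eq_one with rfl | rfl <;>
    rcases z.eq_zero_or_eq_one with rfl | rfl <;> simp [ZMod.val_one]

end ZMod

lemma sum_toReal_sub_mul_toReal_sub_pos_iff {n : ℕ} (a b c : Fin n → ZMod 2) :
    0 < ∑ i, (toReal a i - toReal b i) * (toReal c i - toReal b i) ↔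
      ∃ i, (a - b) i ≠ 0 ∧ (c - b) i ≠ 0 := by
  simp only [toReal, Pi.sub_apply, sub_ne_zero, Finset.mem_univ, true_and,
    Finset.sum_pos_iff_of_nonneg fun i _ => ZMod.val_sub_mul_val_sub_nonneg (a i) (b i) (c i),
    ZMod.val_sub_mul_val_sub_pos_iff]

theorem IsMinimalCode.exists_ne_zero_and_ne_zero {ι F : Type*} [Semiring F]
    {C : Submodule F (ι → F)} (hC : IsMinimalCode C) {u v : ι → F} (hu : u ∈ C) (hv : v ∈ C)
    (hu0 : u ≠ 0) (hv0 : v ≠ 0) : ∃ i, u i ≠ 0 ∧ v i ≠ 0 := by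
  by_contra! hdisj
  have hsupp : {i | u i ≠ 0} ⊆ {i | (u + v) i ≠ 0} := fun i hi => by
    simpa [hdisj i hi] using hi
  have huv0 : u + v ≠ 0 := fun h => hu0 <| funext fun i => by
    by_contra hi
    exact hsupp hi (congrFun h i)
  obtain ⟨j, hj⟩ := Function.ne_iff.mp hv0
  have huj : u j = 0 := by_contra fun h => hj (hdisj j h)
  have huvj : j ∈ {i | (u + v) i ≠ 0} := by simpa [huj] using hj
  rw [← hC _ (add_mem hu hv) huv0 u hu hu0 hsupp] at huvj
  exact huvj huj

theorem isMinimalCode_of_forall_exists_ne_zero_and_ne_zero {ι : Type*}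
    {C : Submodule (ZMod 2) (ι → ZMod 2)}
    (hC : ∀ u ∈ C, ∀ v ∈ C, u ≠ 0 → v ≠ 0 → ∃ i, u i ≠ 0 ∧ v i ≠ 0) : IsMinimalCode C := by
  intro c hc hc0 u hu hu0 hsupp
  by_contra hne
  obtain ⟨j, hcj, huj⟩ : ∃ j, c j ≠ 0 ∧ u j = 0 := by
    by_contra! h
    exact hne (hsupp.antisymm h)
  have hdisj : ∀ i, u i ≠ 0 → (c - u) i = 0 := fun i hi => by
    rw [Pi.sub_apply, sub_eq_zero, (c i).eq_zero_or_eq_one.resolve_left (hsupp hi),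
      (u i).eq_zero_or_eq_one.resolve_left hi]
  have hcu0 : c - u ≠ 0 := fun h => hcj (by simpa [huj] using congrFun h j)
  obtain ⟨i, hui, hcui⟩ := hC u hu (c - u) (sub_mem hc hu) hu0 hcu0
  exact hcui (hdisj i hui)

theorem acute_iff_minimal_general
    (n : ℕ) (C : Submodule (ZMod 2) (Fin n → ZMod 2)) :
    (∀ a ∈ C, ∀ b ∈ C, ∀ c ∈ C, a ≠ b → b ≠ c → a ≠ c →
      0 < ∑ i : Fin n, (toReal a i - toReal b i) * (toReal c i - toReal b i)) ↔
    IsMinimalCode C := by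
  simp only [sum_toReal_sub_mul_toReal_sub_pos_iff]
  constructor
  · intro hacute
    refine isMinimalCode_of_forall_exists_ne_zero_and_ne_zero fun u hu v hv hu0 hv0 => ?_
    by_cases huv : u = v
    · obtain ⟨i, hi⟩ := Function.ne_iff.mp hu0
      exact ⟨i, hi, huv ▸ hi⟩
    · simpa using hacute u hu 0 C.zero_mem v hv hu0 hv0.symm huv
  · intro hmin a ha b hb c hc hab hbc _
    exact hmin.exists_ne_zero_and_ne_zero (sub_mem ha hb) (sub_mem hc hb)
      (sub_ne_zero.mpr hab) (sub_ne_zero.mpr hbc.symm)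

/-- Let `C` be a linear `[n,k]_2` code, embedded into `ℝ^n` by reading coordinates of
`F_2` as the real numbers `0` and `1`. Then the set of codewords of `C` is an acute set
in `ℝ^n` (for all pairwise distinct codewords `a`, `b`, `c` the angle at `b` is strictly
acute, i.e. the real inner product `⟨a-b, c-b⟩` is strictly positive) if and only if `C`
is a minimal code. -/
theorem acute_iff_minimal
    (n k : ℕ) (C : Submodule (ZMod 2) (Fin n → ZMod 2))
    (hk : Module.finrank (ZMod 2) C = k) :
    (∀ a ∈ C, ∀ b ∈ C, ∀ c ∈ C, a ≠ b → b ≠ c → a ≠ c →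
      0 < ∑ i : Fin n, (toReal a i - toReal b i) * (toReal c i - toReal b i)) ↔
    IsMinimalCode C :=
  acute_iff_minimal_general n C
end
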